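/- arXiv:2403.05027 — 8 statements merged into one kernel-verified Lean document; each statement's English description precedes it below -/
import Mathlib

section
/- Let q be an odd prime power, F a finite field with q² elements, and a, b ∈ F such that the discriminant d = (b − b^q)² + 4·a^(q+1) is a nonsquare in 𝔽_q. Then for every λ ∈ F with λ^q = λ and a^(q+1) − (λ − b)^(q+1) ≠ 0, the element x_λ = (a^q + λ − b)/(a^(q+1) − (λ − b)^(q+1)) satisfies x_λ^q ≠ x_λ; equivalently, the point (0, −x_λ) does not lie in U_{a,b}. (Consequently the q-odd O'Nan configurations of Feng and Li, whose candidate extension diagonal points are of this form, can never be extended to a Triple O'Nan configuration.) -/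
/-- A point `(x, y) ∈ F × F` lies on the (affine) Buekenhout–Metz unital `U_{a,b}`. -/
def memBM (q : ℕ) {F : Type*} [Field F] (a b : F) (P : F × F) : Prop :=
  a * P.1 ^ 2 - a ^ q * P.1 ^ (2 * q) + (b - b ^ q) * P.1 ^ (q + 1) = P.2 - P.2 ^ q

theorem stmt_1 (q : ℕ) (hq_odd : Odd q) (hq_pp : IsPrimePow q)
    (F : Type*) [Field F] [Fintype F] (hF : Fintype.card F = q ^ 2)
    (a b : F)
    -- the discriminant `d = (b - b^q)² + 4·a^(q+1)` is a nonsquare in 𝔽_q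
    (hd : ¬ ∃ w : F, w ^ q = w ∧ (b - b ^ q) ^ 2 + 4 * a ^ (q + 1) = w ^ 2)
    (lam : F) (hlam : lam ^ q = lam)
    (hden : a ^ (q + 1) - (lam - b) ^ (q + 1) ≠ 0) :
    ((a ^ q + lam - b) / (a ^ (q + 1) - (lam - b) ^ (q + 1))) ^ q ≠
        (a ^ q + lam - b) / (a ^ (q + 1) - (lam - b) ^ (q + 1)) ∧
      ¬ memBM q a b (0, -((a ^ q + lam - b) / (a ^ (q + 1) - (lam - b) ^ (q + 1)))) := by
  -- Setup: characteristic
  obtain ⟨r, k, hr, hk, hrk⟩ := hq_pp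
  set p := ringChar F with hpdef
  haveI : CharP F p := ringChar.charP F
  obtain ⟨n, hp, hcardp⟩ := FiniteField.card F p
  haveI : Fact p.Prime := ⟨hp⟩
  have hrnat : Nat.Prime r := hr.nat_prime
  have hrp : r = p := by
    have h1 : r ∣ p ^ (n : ℕ) := by
      rw [← hcardp, hF, ← hrk]
      exact dvd_pow (dvd_pow_self r hk.ne') (by positivity)
    have := hrnat.dvd_of_dvd_pow h1
    exact (Nat.prime_dvd_prime_iff_eq hrnat hp).mp this
  have hqpk : q = p ^ k := by rw [← hrk, hrp]
  -- Frobenius-type facts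
  have hsub : ∀ x y : F, (x - y) ^ q = x ^ q - y ^ q := by
    intro x y; rw [hqpk]; exact sub_pow_char_pow x y k
  have hadd : ∀ x y : F, (x + y) ^ q = x ^ q + y ^ q := by
    intro x y; rw [hqpk]; exact add_pow_char_pow x y p k
  have hsq : ∀ z : F, (z ^ q) ^ q = z := by
    intro z
    rw [← pow_mul, ← sq, ← hF]
    exact FiniteField.pow_card z
  have hqpos : 0 < q := hq_odd.pos
  -- key: x^q ≠ x
  set N : F := a ^ q + lam - b with hN
  set D : F := a ^ (q + 1) - (lam - b) ^ (q + 1) with hD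
  have hDq : D ^ q = D := by
    have key : ∀ z : F, (z ^ (q + 1)) ^ q = z ^ (q + 1) := by
      intro z
      have h : (z ^ (q + 1)) ^ q = (z ^ q) ^ q * z ^ q := by
        rw [← pow_mul, ← pow_mul, ← pow_add]
        congr 1
        ring
      rw [h, hsq z, pow_succ, mul_comm]
    have h1 := key a
    have h2 := key (lam - b)
    rw [hD, hsub, h1, h2]
  have hNq : N ^ q = a + lam - b ^ q := by
    rw [hN, hsub, hadd, hsq a, hlam]
  have hmain : N ^ q / D ^ q ≠ N / D := by
    rw [hDq]
    intro h
    have hNN : N ^ q = N := by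
      field_simp at h
      exact h
    rw [hNq, hN] at hNN
    -- a + lam - b^q = a^q + lam - b  ⇒  b - b^q = a^q - a
    have hb : b - b ^ q = a ^ q - a := by linear_combination hNN
    apply hd
    refine ⟨a + a ^ q, ?_, ?_⟩
    · rw [hadd, hsq a]; ring
    · rw [hb, pow_add, pow_one]; ring
  have hx : N ^ q / D ^ q = (N / D) ^ q := (div_pow N D q).symm
  constructor
  · rw [← hx]; exact hmain
  · intro hmem
    unfold memBM at hmem
    simp only at hmem
    rw [zero_pow (by norm_num), zero_pow (by positivity), zero_pow (by positivity),
      hq_odd.neg_pow] at hmem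
    apply hmain
    rw [hx]
    linear_combination -hmem
end

section
/- Let q be an odd prime power, F a finite field with q² elements, and a ∈ F with a ≠ 0. Let s, t ∈ F with s^q = s, t^q = t, s ≠ 0, t ≠ 0, s² ≠ t² and s² + t² ≠ 0. Let h ∈ F be such that (h²)^q = h², h² is a nonsquare in 𝔽_q, and h² ≠ −1. Set c = (s² + t²)/(2·(s + t)) and k = c·(1 + 1/h), and let x ∈ F satisfy 2·a·(x·k)² = −(1 + 1/h²)·(s·t/(s + t)) + (1/h)·((s² + t²)/(s + t)). Then (x, k, h, s, t) is an admissible tuple and all seven associated configuration points P, Q, O, X, Y, M, N lie in the conic unital U_{a,0}. -/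
/-- The tuple `(x, k, h, s, t)` is admissible. -/
def Admissible (q : ℕ) {F : Type*} [Field F] (x k h s t : F) : Prop :=
  x ≠ 0 ∧ k ≠ 0 ∧ h ≠ 0 ∧ h ≠ 1 ∧ s ^ q = s ∧ t ^ q = t ∧ s ≠ 0 ∧ t ≠ 0 ∧
    s ≠ t ∧ s - t * h ≠ 0 ∧ t - s * h ≠ 0

def Wc {F : Type*} [Field F] (h s t : F) : F := h * (s - t) / (s - t * h)
def Uc {F : Type*} [Field F] (h s t : F) : F := s * t * (1 - h) / (s - t * h)
def Vc {F : Type*} [Field F] (h s t : F) : F := h * (t - s) / (t - s * h)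
def Zc {F : Type*} [Field F] (h s t : F) : F := s * t * (1 - h) / (t - s * h)

/-- Configuration point `P = (x·k·h, k·h)`. -/
def ptP {F : Type*} [Field F] (x k h : F) : F × F := (x * k * h, k * h)
/-- Configuration point `Q = (x·k, k)`. -/
def ptQ {F : Type*} [Field F] (x k : F) : F × F := (x * k, k)
/-- Configuration point `M = (k·x·W, k·W + U₀)`. -/
def ptM {F : Type*} [Field F] (x k h s t : F) : F × F :=
  (k * x * Wc h s t, k * Wc h s t + Uc h s t)
/-- Configuration point `N = (k·x·V, k·V + Z)`. -/
def ptN {F : Type*} [Field F] (x k h s t : F) : F × F :=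
  (k * x * Vc h s t, k * Vc h s t + Zc h s t)

/-
For `b = 0` the Frobenius `z ↦ z ^ q` is additive, so `(X, Y) ∈ U_{a,0}` exactly when
`a X² - Y` lies in `𝔽_q`. The choices of `k` and `x` make `a X² - Y` a rational function of
`s`, `t` and `h²` at each of the seven points; at `M` and `N` it is even the constant
`-(s + t) / 2`. Since `s`, `t`, `h²` lie in `𝔽_q`, so do these values. That `h²` is a nonsquare
in `𝔽_q` means `h ≠ ± w` for every `w ∈ 𝔽_q`, which keeps all the denominators nonzero.
-/

def unitalForm {F : Type*} [Field F] (a : F) (P : F × F) : F := a * P.1 ^ 2 - P.2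

theorem memBM_zero_iff {F : Type*} [Field F] (p n : ℕ) [ExpChar F p] (a : F) (P : F × F) :
    memBM (p ^ n) a 0 P ↔ iterateFrobenius F p n (unitalForm a P) = unitalForm a P := by
  rw [memBM, unitalForm, iterateFrobenius_def, sub_pow_expChar_pow, mul_pow, ← pow_mul,
    zero_pow (expChar_pow_pos F p n).ne', sub_zero, zero_mul, add_zero, mul_comm 2]
  constructor <;> intro h <;> linear_combination -h

theorem FiniteField.two_ne_zero_of_odd_card {F : Type*} [Field F] [Fintype F]
    (hF : Odd (Fintype.card F)) : (2 : F) ≠ 0 :=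
  Ring.two_ne_zero fun h => by
    have := FiniteField.even_card_iff_char_two.mp h
    rw [← Nat.even_iff] at this
    exact Nat.not_even_iff_odd.mpr hF this

theorem ne_of_not_exists_sq_eq {F : Type*} [Field F] {q : ℕ} {h w : F}
    (hh : ¬ ∃ w : F, w ^ q = w ∧ h ^ 2 = w ^ 2) (hw : w ^ q = w) : h ≠ w ∧ h ≠ -w :=
  ⟨fun e => hh ⟨w, hw, by rw [e]⟩, fun e => hh ⟨w, hw, by rw [e, neg_sq]⟩⟩

theorem sub_mul_ne_zero_of_ne_div {F : Type*} [Field F] {s t h : F} (ht : t ≠ 0)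
    (hne : h ≠ s / t) : s - t * h ≠ 0 :=
  sub_ne_zero.mpr fun e => hne (by rw [e, mul_div_cancel_left₀ h ht])

@[simp]
theorem unitalForm_zero_left {F : Type*} [Field F] (a y : F) : unitalForm a (0, y) = -y := by
  simp [unitalForm]

section ConfigurationValues

variable {F : Type*} [Field F] {a s t h k x : F}

theorem ptN_eq_ptM_swap : ptN x k h s t = ptM x k h t s := by
  simp only [ptN, ptM, Vc, Zc, Wc, Uc, mul_comm s t]

theorem ne_zero_of_sq_mul_eq (h2 : (2 : F) ≠ 0) (hh : h ≠ 0) (hst : s + t ≠ 0)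
    (hD₁ : s - t * h ≠ 0) (hD₂ : t - s * h ≠ 0)
    (hx : a * (x * k) ^ 2 = -((s - t * h) * (t - s * h)) / (2 * h ^ 2 * (s + t))) : x ≠ 0 := by
  rintro rfl
  rw [zero_mul, zero_pow two_ne_zero, mul_zero, eq_comm, div_eq_zero_iff, neg_eq_zero] at hx
  exact hx.elim (mul_ne_zero hD₁ hD₂) (by simp [h2, hh, hst])

variable (h2 : (2 : F) ≠ 0) (hh : h ≠ 0) (hst : s + t ≠ 0)
  (hk : k = (s ^ 2 + t ^ 2) * (h + 1) / (2 * h * (s + t)))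
  (hx : a * (x * k) ^ 2 = -((s - t * h) * (t - s * h)) / (2 * h ^ 2 * (s + t)))
include h2 hh hst hk hx

theorem unitalForm_ptQ :
    unitalForm a (ptQ x k) = -((h ^ 2 + 1) * (s * t) + h ^ 2 * (s ^ 2 + t ^ 2)) /
      (2 * h ^ 2 * (s + t)) := by
  dsimp only [unitalForm, ptQ]
  rw [hx, hk]
  field_simp
  ring

theorem unitalForm_ptP :
    unitalForm a (ptP x k h) = -((h ^ 2 + 1) * (s * t) + (s ^ 2 + t ^ 2)) / (2 * (s + t)) := by
  dsimp only [unitalForm, ptP]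
  rw [show a * (x * k * h) ^ 2 = a * (x * k) ^ 2 * h ^ 2 by ring, hx, hk]
  field_simp
  ring

theorem unitalForm_ptM (hD : s - t * h ≠ 0) :
    unitalForm a (ptM x k h s t) = -(s + t) / 2 := by
  dsimp only [unitalForm, ptM, Wc, Uc]
  rw [show a * (k * x * (h * (s - t) / (s - t * h))) ^ 2
      = a * (x * k) ^ 2 * (h * (s - t) / (s - t * h)) ^ 2 by ring, hx, hk]
  field_simp
  ring

theorem unitalForm_ptN (hD : t - s * h ≠ 0) :
    unitalForm a (ptN x k h s t) = -(s + t) / 2 := by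
  rw [ptN_eq_ptM_swap, add_comm s t]
  exact unitalForm_ptM h2 hh (add_comm s t ▸ hst) (by rw [hk]; ring)
    (by rw [hx]; ring) hD

end ConfigurationValues

theorem stmt_6_general (q : ℕ) (hq_odd : Odd q) (hq_pp : IsPrimePow q)
    (F : Type*) [Field F] [Fintype F] (hF : Fintype.card F = q ^ 2)
    (a : F)
    (s t : F) (hs : s ^ q = s) (ht : t ^ q = t) (hs0 : s ≠ 0) (ht0 : t ≠ 0)
    (hst : s ^ 2 ≠ t ^ 2) (hst' : s ^ 2 + t ^ 2 ≠ 0)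
    (h : F) (hh1 : (h ^ 2) ^ q = h ^ 2)
    (hh2 : ¬ ∃ w : F, w ^ q = w ∧ h ^ 2 = w ^ 2)  -- h² is a nonsquare in 𝔽_q
    (c k x : F)
    (hc : c = (s ^ 2 + t ^ 2) / (2 * (s + t)))
    (hk : k = c * (1 + 1 / h))
    (hx : 2 * a * (x * k) ^ 2 =
      -(1 + 1 / h ^ 2) * (s * t / (s + t)) + (1 / h) * ((s ^ 2 + t ^ 2) / (s + t))) :
    Admissible q x k h s t ∧
      memBM q a 0 (ptP x k h) ∧ memBM q a 0 (ptQ x k) ∧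
      memBM q a 0 ((0 : F), (0 : F)) ∧ memBM q a 0 ((0 : F), s) ∧ memBM q a 0 ((0 : F), t) ∧
      memBM q a 0 (ptM x k h s t) ∧ memBM q a 0 (ptN x k h s t) := by
  obtain ⟨p, n, hp, -, rfl⟩ := hq_pp
  have : Fact p.Prime := ⟨hp.nat_prime⟩
  have : CharP F p := charP_of_card_eq_prime_pow (f := n * 2) (by rw [hF, pow_mul])
  have h2 : (2 : F) ≠ 0 := FiniteField.two_ne_zero_of_odd_card (hF ▸ hq_odd.pow)
  obtain ⟨hh0, -⟩ := ne_of_not_exists_sq_eq hh2 (zero_pow (expChar_pow_pos F p n).ne')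
  obtain ⟨hh1', hhm1⟩ := ne_of_not_exists_sq_eq hh2 (one_pow _)
  have hD₁ := sub_mul_ne_zero_of_ne_div ht0
    (ne_of_not_exists_sq_eq hh2 (by rw [div_pow, hs, ht])).1
  have hD₂ := sub_mul_ne_zero_of_ne_div hs0
    (ne_of_not_exists_sq_eq hh2 (by rw [div_pow, ht, hs])).1
  have hσ : s + t ≠ 0 := fun e => hst (by linear_combination (s - t) * e)
  have hk' : k = (s ^ 2 + t ^ 2) * (h + 1) / (2 * h * (s + t)) := by
    rw [hk, hc]; field_simp
  have hx' : a * (x * k) ^ 2 = -((s - t * h) * (t - s * h)) / (2 * h ^ 2 * (s + t)) := by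
    field_simp at hx ⊢; linear_combination hx
  have hk0 : k ≠ 0 := by
    rw [hk']
    exact div_ne_zero (mul_ne_zero hst' fun e => hhm1 (eq_neg_of_add_eq_zero_left e))
      (by simp [h2, hh0, hσ])
  have hφs : iterateFrobenius F p n s = s := hs
  have hφt : iterateFrobenius F p n t = t := ht
  have hφh : iterateFrobenius F p n h ^ 2 = h ^ 2 := by rw [← map_pow]; exact hh1
  have hP := unitalForm_ptP h2 hh0 hσ hk' hx'
  have hQ := unitalForm_ptQ h2 hh0 hσ hk' hx'
  have hM := unitalForm_ptM h2 hh0 hσ hk' hx' hD₁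
  have hN := unitalForm_ptN h2 hh0 hσ hk' hx' hD₂
  refine ⟨⟨ne_zero_of_sq_mul_eq h2 hh0 hσ hD₁ hD₂ hx', hk0, hh0, hh1', hs, ht, hs0, ht0,
    fun e => hst (by rw [e]), hD₁, hD₂⟩, ?_, ?_, ?_, ?_, ?_, ?_, ?_⟩ <;>
  simp only [memBM_zero_iff, hP, hQ, hM, hN, unitalForm_zero_left, map_div₀, map_neg, map_add,
    map_mul, map_pow, map_ofNat, map_one, map_zero, hφs, hφt, hφh]

theorem stmt_6 (q : ℕ) (hq_odd : Odd q) (hq_pp : IsPrimePow q)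
    (F : Type*) [Field F] [Fintype F] (hF : Fintype.card F = q ^ 2)
    (a : F) (ha : a ≠ 0)
    (s t : F) (hs : s ^ q = s) (ht : t ^ q = t) (hs0 : s ≠ 0) (ht0 : t ≠ 0)
    (hst : s ^ 2 ≠ t ^ 2) (hst' : s ^ 2 + t ^ 2 ≠ 0)
    (h : F) (hh1 : (h ^ 2) ^ q = h ^ 2)
    (hh2 : ¬ ∃ w : F, w ^ q = w ∧ h ^ 2 = w ^ 2)  -- h² is a nonsquare in 𝔽_q
    (hh3 : h ^ 2 ≠ -1)
    (c k x : F)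
    (hc : c = (s ^ 2 + t ^ 2) / (2 * (s + t)))
    (hk : k = c * (1 + 1 / h))
    (hx : 2 * a * (x * k) ^ 2 =
      -(1 + 1 / h ^ 2) * (s * t / (s + t)) + (1 / h) * ((s ^ 2 + t ^ 2) / (s + t))) :
    Admissible q x k h s t ∧
      memBM q a 0 (ptP x k h) ∧ memBM q a 0 (ptQ x k) ∧
      memBM q a 0 ((0 : F), (0 : F)) ∧ memBM q a 0 ((0 : F), s) ∧ memBM q a 0 ((0 : F), t) ∧
      memBM q a 0 (ptM x k h s t) ∧ memBM q a 0 (ptN x k h s t) :=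
  stmt_6_general q hq_odd hq_pp F hF a s t hs ht hs0 ht0 hst hst' h hh1 hh2 c k x hc hk hx
end

section
/- Let K be a finite field with q elements, where q ≡ 1 (mod 4) and q > 5. Then there exist X, Y ∈ K such that X and Y are both nonsquares in K, X/Y is a fourth power in K (i.e. X = u⁴·Y for some u ∈ K), X + 1 is a nonzero square in K, and Y + 1 is a nonsquare in K. -/
/-!
Let `S` be the set of nonsquares `w` with `w + 1` also a nonsquare. Since `-1` is a square,
`w ↦ -(w + 1)` is an involution of `S`, so `2 ∑_S w + #S = 0` in `K`. On the other hand,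
`4 #S = q - 1` (a Jacobi sum computation), so `#S` is nonzero in `K` and hence `∑_S w ≠ 0`.
If `S` were stable under multiplication by a fourth power `u⁴ ≠ 1` (which exists as `q > 5`),
its sum would vanish. So some `w ∈ S` has `u⁴ w ∉ S`, and `X = u⁴ w`, `Y = w` work.
-/

open Finset

theorem two_mul_sum_add_card_eq_zero_of_neg_add_one_mem {R : Type*} [CommRing R] {A : Finset R}
    (hA : ∀ w ∈ A, -(w + 1) ∈ A) : 2 * ∑ w ∈ A, w + #A = 0 := by
  have hinv : ∑ w ∈ A, -(w + 1) = ∑ w ∈ A, w :=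
    sum_nbij' (fun w => -(w + 1)) (fun w => -(w + 1)) hA hA
      (fun w _ => by ring) (fun w _ => by ring) (fun _ _ => rfl)
  rw [sum_neg_distrib, sum_add_distrib, sum_const, nsmul_one] at hinv
  linear_combination -hinv

theorem sum_eq_zero_of_mul_mem {R : Type*} [CommRing R] [IsDomain R] {A : Finset R} {a : R}
    (ha₀ : a ≠ 0) (ha₁ : a ≠ 1) (hA : ∀ w ∈ A, a * w ∈ A) : ∑ w ∈ A, w = 0 := by
  let f : R ↪ R := ⟨(a * ·), mul_right_injective₀ ha₀⟩
  have hmap : A.map f = A := map_eq_of_subset fun _ hw => by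
    obtain ⟨v, hv, rfl⟩ := mem_map.mp hw
    exact hA v hv
  have hscale : a * ∑ w ∈ A, w = ∑ w ∈ A, w := by
    conv_rhs => rw [← hmap]
    rw [sum_map, mul_sum]
    rfl
  have : (a - 1) * ∑ w ∈ A, w = 0 := by linear_combination hscale
  exact (mul_eq_zero.mp this).resolve_left (sub_ne_zero.mpr ha₁)

theorem exists_pow_ne_one {R : Type*} [CommRing R] [IsDomain R] [Fintype R] [DecidableEq R]
    {n : ℕ} (hn : 0 < n) (hR : n + 1 < Fintype.card R) : ∃ u : R, u ≠ 0 ∧ u ^ n ≠ 1 := by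
  by_contra! h
  have hsub : univ.erase (0 : R) ⊆ Polynomial.nthRootsFinset n (1 : R) := fun u hu =>
    (Polynomial.mem_nthRootsFinset hn 1).mpr (h u (ne_of_mem_erase hu))
  have hcard := card_le_card hsub
  rw [Polynomial.nthRootsFinset_def, card_erase_of_mem (mem_univ 0), card_univ] at hcard
  have := (Multiset.toFinset_card_le _).trans (Polynomial.card_nthRoots n (1 : R))
  omega

theorem isSquare_neg_iff_of_isSquare_neg_one {R : Type*} [CommMonoid R] [HasDistribNeg R]
    (h : IsSquare (-1 : R)) {a : R} : IsSquare (-a) ↔ IsSquare a := by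
  constructor <;> intro ha <;> simpa using h.mul ha

section

variable {K : Type*} [Field K] [Fintype K] [DecidableEq K]

theorem sum_quadraticChar_mul_quadraticChar_add_one (hK : ringChar K ≠ 2) :
    ∑ x : K, quadraticChar K x * quadraticChar K (x + 1) = -1 := by
  have hJ := jacobiSum_nontrivial_inv (quadraticChar_ne_one hK)
  rw [(quadraticChar_isQuadratic K).inv, jacobiSum] at hJ
  calc ∑ x : K, quadraticChar K x * quadraticChar K (x + 1)
      = ∑ x : K, quadraticChar K (-x) * quadraticChar K (-x + 1) :=
        (Equiv.sum_comp (Equiv.neg K) _).symm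
    _ = quadraticChar K (-1) * ∑ x : K, quadraticChar K x * quadraticChar K (1 - x) := by
        rw [mul_sum]
        refine sum_congr rfl fun x _ => ?_
        rw [neg_eq_neg_one_mul x, map_mul, neg_one_mul, neg_add_eq_sub]
        ring
    _ = -1 := by
        rw [hJ, mul_neg, ← sq, quadraticChar_sq_one (neg_ne_zero.mpr one_ne_zero)]

theorem four_mul_card_consecutive_nonsquares_add_one
    (hK : ringChar K ≠ 2) (hneg : IsSquare (-1 : K)) :
    4 * #{w : K | ¬IsSquare w ∧ ¬IsSquare (w + 1)} + 1 = Fintype.card K := by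
  set χ := quadraticChar K
  have hpoint : ∀ x : K, (1 - χ x) * (1 - χ (x + 1)) =
      if ¬IsSquare x ∧ ¬IsSquare (x + 1) then 4 else 0 := by
    intro x
    by_cases hx : x = 0
    · simp [χ, hx]
    by_cases hx1 : x + 1 = 0
    · obtain rfl : x = -1 := eq_neg_of_add_eq_zero_left hx1
      simp [χ, hneg, (quadraticChar_one_iff_isSquare hx).mpr hneg]
    rcases (quadraticChar_dichotomy hx) with h | h <;>
    rcases (quadraticChar_dichotomy hx1) with h1 | h1 <;>
      simp [χ, h, h1, ← quadraticChar_one_iff_isSquare hx,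
        ← quadraticChar_one_iff_isSquare hx1]
  have hshift : ∑ x : K, χ (x + 1) = 0 :=
    (Equiv.sum_comp (Equiv.addRight 1) χ).trans (quadraticChar_sum_zero hK)
  have : (4 * #{w : K | ¬IsSquare w ∧ ¬IsSquare (w + 1)} + 1 : ℤ) = Fintype.card K := calc
    _ = ∑ x : K, (1 - χ x) * (1 - χ (x + 1)) + 1 := by
        simp only [hpoint, sum_ite, sum_const_zero, add_zero, sum_const, nsmul_eq_mul]; ring
    _ = ∑ _x : K, (1 : ℤ) - ∑ x, χ x - ∑ x, χ (x + 1) + ∑ x, χ x * χ (x + 1) + 1 := by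
        rw [← sum_sub_distrib, ← sum_sub_distrib, ← sum_add_distrib]
        exact congrArg (· + 1) (sum_congr rfl fun x _ => by ring)
    _ = Fintype.card K := by
        rw [quadraticChar_sum_zero hK, hshift, sum_quadraticChar_mul_quadraticChar_add_one hK]
        simp
  exact_mod_cast this

end

theorem stmt_9_general (q : ℕ) (hq1 : q % 4 = 1) (hq5 : 5 < q)
    (K : Type*) [Field K] [Fintype K] (hK : Fintype.card K = q) :
    ∃ X Y : K,
      (∀ w : K, X ≠ w ^ 2) ∧                     -- X is a nonsquare in K
      (∀ w : K, Y ≠ w ^ 2) ∧                     -- Y is a nonsquare in K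
      (∃ u : K, X = u ^ 4 * Y) ∧                 -- X/Y is a fourth power in K
      (X + 1 ≠ 0 ∧ ∃ w : K, X + 1 = w ^ 2) ∧     -- X + 1 is a nonzero square in K
      (∀ w : K, Y + 1 ≠ w ^ 2) := by             -- Y + 1 is a nonsquare in K
  classical
  have hchar : ringChar K ≠ 2 := mt (FiniteField.even_card_of_char_two (F := K)) (by omega)
  have hneg : IsSquare (-1 : K) := FiniteField.isSquare_neg_one_iff.mpr (by omega)
  set S : Finset K := {w : K | ¬IsSquare w ∧ ¬IsSquare (w + 1)} with hS
  have hinv : 2 * ∑ w ∈ S, w + #S = 0 := two_mul_sum_add_card_eq_zero_of_neg_add_one_mem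
    fun w hw => by
      simp only [hS, mem_filter, mem_univ, true_and] at hw ⊢
      rw [show -(w + 1) + 1 = -w by ring]
      simpa only [isSquare_neg_iff_of_isSquare_neg_one hneg] using hw.symm
  obtain ⟨u, hu₀, hu₁⟩ := exists_pow_ne_one (R := K) (n := 4) (by norm_num) (by omega)
  obtain ⟨w, hwS, huwS⟩ : ∃ w ∈ S, u ^ 4 * w ∉ S := by
    by_contra! hstable
    have hcard : ((4 * #S + 1 : ℕ) : K) = 0 := by
      rw [four_mul_card_consecutive_nonsquares_add_one hchar hneg]
      exact FiniteField.cast_card_eq_zero K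
    rw [sum_eq_zero_of_mul_mem (pow_ne_zero 4 hu₀) hu₁ hstable] at hinv
    push_cast at hcard
    exact one_ne_zero (by linear_combination hcard - 4 * hinv : (1 : K) = 0)
  simp only [hS, mem_filter, mem_univ, true_and, not_and, not_not] at hwS huwS
  have hX : ¬IsSquare (u ^ 4 * w) := fun h => hwS.1 <| by
    simpa [hu₀] using h.div (⟨u ^ 2, by ring⟩ : IsSquare (u ^ 4))
  have hne_sq {z : K} (hz : ¬IsSquare z) (r : K) : z ≠ r ^ 2 :=
    fun hr => hz ⟨r, hr.trans (sq r)⟩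
  obtain ⟨r, hr⟩ := huwS hX
  refine ⟨u ^ 4 * w, w, hne_sq hX, hne_sq hwS.1, ⟨u, rfl⟩,
    ⟨fun h0 => hX ?_, r, hr.trans (sq r).symm⟩, hne_sq hwS.2⟩
  rwa [eq_neg_of_add_eq_zero_left h0]

theorem stmt_9 (q : ℕ) (hq_pp : IsPrimePow q) (hq1 : q % 4 = 1) (hq5 : 5 < q)
    (K : Type*) [Field K] [Fintype K] (hK : Fintype.card K = q) :
    ∃ X Y : K,
      (∀ w : K, X ≠ w ^ 2) ∧                     -- X is a nonsquare in K
      (∀ w : K, Y ≠ w ^ 2) ∧                     -- Y is a nonsquare in K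
      (∃ u : K, X = u ^ 4 * Y) ∧                 -- X/Y is a fourth power in K
      (X + 1 ≠ 0 ∧ ∃ w : K, X + 1 = w ^ 2) ∧     -- X + 1 is a nonzero square in K
      (∀ w : K, Y + 1 ≠ w ^ 2) :=
  stmt_9_general q hq1 hq5 K hK
end

section
/- Let K be a finite field with q elements, where q ≡ 3 (mod 4) and q ≥ 7. Then there exist X, Y ∈ K such that X and Y are both nonzero squares in K, X + 1 is a nonzero square in K, and Y + 1 is a nonsquare in K; consequently (X + 1)·(Y + 1) is a nonsquare in K. -/
/-!
Since `q ≡ 3 (mod 4)`, `-1` is a nonsquare in `K`. For `X`, a nonzero `a` with `a² + 1 = b²` comes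
from the factorisation `(b - a)(b + a) = 1`: take `b - a = s`, `b + a = s⁻¹` for any `s ≠ 0, ±1`.
For `Y`, if `y + 1` were a square for every nonzero square `y`, then `0, 1, 2, …` would all be
squares, among them `p - 1 = -1` for `p` the characteristic.
-/

theorem not_isSquare_mul_of_isSquare {G : Type*} [CommGroupWithZero G] {a b : G} (ha : a ≠ 0)
    (hsq : IsSquare a) (hb : ¬IsSquare b) : ¬IsSquare (a * b) := fun hab =>
  hb (inv_mul_cancel_left₀ ha b ▸ hsq.inv.mul hab)

theorem exists_sq_add_one_eq_sq {K : Type*} [Field K] (h2 : (2 : K) ≠ 0) {s : K} (hs0 : s ≠ 0)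
    (hs : s ^ 2 ≠ 1) : ∃ a b : K, a ≠ 0 ∧ a ^ 2 + 1 = b ^ 2 := by
  refine ⟨(s⁻¹ - s) / 2, (s⁻¹ + s) / 2, ?_, by field_simp; ring⟩
  refine div_ne_zero (fun h => hs ?_) h2
  field_simp at h
  linear_combination -h

theorem exists_isSquare_not_isSquare_add_one {R : Type*} [Ring R] (p : ℕ) [CharP R p]
    (hp : p ≠ 0) (h : ¬IsSquare (-1 : R)) : ∃ y : R, y ≠ 0 ∧ IsSquare y ∧ ¬IsSquare (y + 1) := by
  by_contra! H
  have hsq (n : ℕ) : IsSquare (n : R) := by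
    induction n with
    | zero => simp
    | succ n ih =>
      rw [Nat.cast_succ]
      by_cases hn : (n : R) = 0
      · simp [hn]
      · exact H _ hn ih
  apply h
  simpa [Nat.cast_pred (Nat.pos_of_ne_zero hp), CharP.cast_eq_zero R p] using hsq (p - 1)

theorem stmt_10_general (q : ℕ) (hq3 : q % 4 = 3) (hq7 : 7 ≤ q)
    (K : Type*) [Field K] [Fintype K] (hK : Fintype.card K = q) :
    ∃ X Y : K,
      (X ≠ 0 ∧ ∃ w : K, X = w ^ 2) ∧             -- X is a nonzero square in K
      (Y ≠ 0 ∧ ∃ w : K, Y = w ^ 2) ∧             -- Y is a nonzero square in K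
      (X + 1 ≠ 0 ∧ ∃ w : K, X + 1 = w ^ 2) ∧     -- X + 1 is a nonzero square in K
      (∀ w : K, Y + 1 ≠ w ^ 2) ∧                 -- Y + 1 is a nonsquare in K
      (∀ w : K, (X + 1) * (Y + 1) ≠ w ^ 2) := by -- (X+1)(Y+1) is a nonsquare in K
  classical
  have hneg : ¬IsSquare (-1 : K) := by simp [FiniteField.isSquare_neg_one_iff, hK, hq3]
  have h2 : (2 : K) ≠ 0 := fun h => hneg ⟨1, by linear_combination -h⟩
  obtain ⟨s, -, hs⟩ := Finset.exists_mem_notMem_of_card_lt_card (s := ({0, 1, -1} : Finset K))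
    (t := Finset.univ) (Finset.card_le_three.trans_lt (by simp [hK]; omega))
  obtain ⟨hs0, hs1, hs2⟩ : s ≠ 0 ∧ s ≠ 1 ∧ s ≠ -1 := by simpa using hs
  obtain ⟨a, b, ha, hab⟩ := exists_sq_add_one_eq_sq h2 hs0 (sq_ne_one_iff.2 ⟨hs1, hs2⟩)
  obtain ⟨y, hy0, hy, hy1⟩ :=
    exists_isSquare_not_isSquare_add_one _ (CharP.ringChar_ne_zero_of_finite K) hneg
  have hx1 : a ^ 2 + 1 ≠ 0 := fun h => hneg ⟨a, by linear_combination -h⟩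
  have hx1sq : IsSquare (a ^ 2 + 1) := (isSquare_iff_exists_sq _).2 ⟨b, hab⟩
  refine ⟨a ^ 2, y, ⟨pow_ne_zero 2 ha, a, rfl⟩, ⟨hy0, hy.exists_sq⟩, ⟨hx1, b, hab⟩,
    fun w hw => hy1 ((isSquare_iff_exists_sq _).2 ⟨w, hw⟩), fun w hw => ?_⟩
  exact not_isSquare_mul_of_isSquare hx1 hx1sq hy1 ((isSquare_iff_exists_sq _).2 ⟨w, hw⟩)

theorem stmt_10 (q : ℕ) (hq_pp : IsPrimePow q) (hq3 : q % 4 = 3) (hq7 : 7 ≤ q)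
    (K : Type*) [Field K] [Fintype K] (hK : Fintype.card K = q) :
    ∃ X Y : K,
      (X ≠ 0 ∧ ∃ w : K, X = w ^ 2) ∧             -- X is a nonzero square in K
      (Y ≠ 0 ∧ ∃ w : K, Y = w ^ 2) ∧             -- Y is a nonzero square in K
      (X + 1 ≠ 0 ∧ ∃ w : K, X + 1 = w ^ 2) ∧     -- X + 1 is a nonzero square in K
      (∀ w : K, Y + 1 ≠ w ^ 2) ∧                 -- Y + 1 is a nonsquare in K
      (∀ w : K, (X + 1) * (Y + 1) ≠ w ^ 2) :=
  stmt_10_general q hq3 hq7 K hK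
end

section
/- Let q be a prime power with q ≡ 1 (mod 4) and F a finite field with q² elements. Let e ∈ F with e ≠ 0 and e^q = −e; let b₁ ∈ F with b₁^q = b₁ and b₁ ≠ 0; let i ∈ F with i^q = i and i² = −1; let h ∈ F with h ≠ 0 and h^q = −h. Set t = 2·h²·(i − 1)/(h² + 1), s = i·t, k = b₁·e·(1 − h), and x = 1/k. Then (x, k, h, s, t) is an admissible tuple and all seven associated configuration points P, Q, O, X, Y, M, N lie in the Buekenhout–Metz unital U_{1, b₁·e}. -/
section

variable {F : Type*} [Field F]

theorem exists_ringHom_pow_eq [Fintype F] {q m : ℕ} (hq : IsPrimePow q)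
    (hF : Fintype.card F = q ^ m) : ∃ σ : F →+* F, ∀ z, z ^ q = σ z := by
  obtain ⟨p, n, hp, -, rfl⟩ := hq
  have : Fact p.Prime := ⟨hp.nat_prime⟩
  have : CharP F p := charP_of_card_eq_prime_pow (f := n * m) (by rw [hF, pow_mul])
  exact ⟨iterateFrobenius F p n, fun _ => rfl⟩

theorem two_ne_zero_of_card_mod_two [Fintype F] (hF : Fintype.card F % 2 = 1) : (2 : F) ≠ 0 :=
  Ring.two_ne_zero fun h => by have := FiniteField.even_card_of_char_two h; omega

theorem ne_of_map_eq_neg {σ : F →+* F} (h2 : (2 : F) ≠ 0) {h z : F} (hh : σ h = -h)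
    (hh0 : h ≠ 0) (hz : σ z = z) : h ≠ z := by
  rintro rfl
  exact mul_ne_zero h2 hh0 (by linear_combination hh - hz)

theorem memBM_zero_left_iff {q : ℕ} (hq : q ≠ 0) (a b y : F) :
    memBM q a b (0, y) ↔ y ^ q = y := by
  simp [memBM, hq, sub_eq_zero, eq_comm]

theorem memBM_iff_of_pow_eq {q : ℕ} {σ : F →+* F} (hσ : ∀ z, z ^ q = σ z) (a b : F) (P : F × F) :
    memBM q a b P ↔
      a * P.1 ^ 2 - σ a * σ P.1 ^ 2 + (b - σ b) * (P.1 * σ P.1) = P.2 - σ P.2 := by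
  simp only [memBM, mul_comm 2 q, pow_mul, pow_succ, hσ]
  ring_nf

-- Both sides are affine in `c`: `hW` matches the coefficients of `c`, `hU` the constant terms.
theorem memBM_mk_mul_add_of_relations {q : ℕ} {σ : F →+* F}
    (hσ : ∀ z, z ^ q = σ z) {c h W U : F} (hc : σ c = -c) (hh : σ h = -h)
    (hW : 2 * W * σ W = (1 - h) * W + (1 + h) * σ W)
    (hU : W ^ 2 - σ W ^ 2 = U - σ U) : memBM q 1 c (W, c * (1 - h) * W + U) := by
  rw [memBM_iff_of_pow_eq hσ]
  simp only [map_one, map_add, map_mul, map_sub, hc, hh]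
  linear_combination hU + c * hW

theorem Wc_map (σ : F →+* F) (h s t : F) : σ (Wc h s t) = Wc (σ h) (σ s) (σ t) := by
  simp [Wc, map_div₀]

theorem Uc_map (σ : F →+* F) (h s t : F) : σ (Uc h s t) = Uc (σ h) (σ s) (σ t) := by
  simp [Uc, map_div₀]

theorem ptN_eq_ptM (x k h s t : F) : ptN x k h s t = ptM x k h t s := by
  simp only [ptN, ptM, Vc, Zc, Wc, Uc, mul_comm s t]

theorem two_mul_Wc_mul_Wc_neg {h s t : F} (hp : s - t * h ≠ 0) (hm : s + t * h ≠ 0) :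
    2 * Wc h s t * Wc (-h) s t = (1 - h) * Wc h s t + (1 + h) * Wc (-h) s t := by
  rw [mul_comm] at hp hm
  simp only [Wc, mul_neg, sub_neg_eq_add, neg_mul, mul_comm t h]
  field_simp
  ring

theorem Wc_sq_sub_Wc_neg_sq {h s t : F} (hp : s - t * h ≠ 0) (hm : s + t * h ≠ 0)
    (hst : s ^ 2 - t ^ 2 * h ^ 2 + 2 * h ^ 2 * (s - t) = 0) :
    Wc h s t ^ 2 - Wc (-h) s t ^ 2 = Uc h s t - Uc (-h) s t := by
  rw [mul_comm] at hp hm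
  simp only [Wc, Uc, mul_neg, sub_neg_eq_add, neg_mul, mul_comm t h]
  field_simp
  linear_combination 2 * s * t * h * (s - t) * hst

section Configuration

variable {q : ℕ} {σ : F →+* F} {c h x k : F}

theorem memBM_ptP (hσ : ∀ z, z ^ q = σ z) (hc : σ c = -c) (hh : σ h = -h) (hxk : x * k = 1)
    (hk : k = c * (1 - h)) : memBM q 1 c (ptP x k h) := by
  have := memBM_mk_mul_add_of_relations hσ hc hh (W := h) (U := 0) (by rw [hh]; ring) (by simp [hh])
  rw [← hk] at this
  simpa [ptP, hxk] using this

theorem memBM_ptQ (hσ : ∀ z, z ^ q = σ z) (hc : σ c = -c) (hh : σ h = -h) (hxk : x * k = 1)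
    (hk : k = c * (1 - h)) : memBM q 1 c (ptQ x k) := by
  have := memBM_mk_mul_add_of_relations hσ hc hh (W := 1) (U := 0) (by rw [map_one]; ring) (by simp)
  rw [← hk] at this
  simpa [ptQ, hxk] using this

theorem memBM_ptM {s t : F} (hσ : ∀ z, z ^ q = σ z) (hc : σ c = -c) (hh : σ h = -h)
    (hs : σ s = s) (ht : σ t = t) (hp : s - t * h ≠ 0) (hm : s + t * h ≠ 0)
    (hst : s ^ 2 - t ^ 2 * h ^ 2 + 2 * h ^ 2 * (s - t) = 0) (hxk : x * k = 1)
    (hk : k = c * (1 - h)) : memBM q 1 c (ptM x k h s t) := by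
  have hσW : σ (Wc h s t) = Wc (-h) s t := by rw [Wc_map, hh, hs, ht]
  have hσU : σ (Uc h s t) = Uc (-h) s t := by rw [Uc_map, hh, hs, ht]
  have := memBM_mk_mul_add_of_relations hσ hc hh (W := Wc h s t) (U := Uc h s t)
    (by rw [hσW]; exact two_mul_Wc_mul_Wc_neg hp hm)
    (by rw [hσW, hσU]; exact Wc_sq_sub_Wc_neg_sq hp hm hst)
  rw [← hk] at this
  simpa [ptM, mul_comm k x, hxk] using this

end Configuration

theorem unital_relations_of_mul_sq_add_one {i h t : F} (hi2 : i ^ 2 = -1)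
    (ht : t * (h ^ 2 + 1) = 2 * h ^ 2 * (i - 1)) :
    (i * t) ^ 2 - t ^ 2 * h ^ 2 + 2 * h ^ 2 * (i * t - t) = 0 ∧
      t ^ 2 - (i * t) ^ 2 * h ^ 2 + 2 * h ^ 2 * (t - i * t) = 0 :=
  ⟨by linear_combination (-t) * ht + t ^ 2 * hi2,
    by linear_combination t * ht - t ^ 2 * h ^ 2 * hi2⟩

section SquareRootOfMinusOne

variable {i h t : F}

theorem sq_add_one_ne_zero_of_ne (hi2 : i ^ 2 = -1) (hhi : h ≠ i) (hhni : h ≠ -i) :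
    h ^ 2 + 1 ≠ 0 := by
  rw [show h ^ 2 + 1 = (h - i) * (h + i) by linear_combination hi2]
  exact mul_ne_zero (sub_ne_zero.2 hhi) fun h' => hhni (eq_neg_of_add_eq_zero_left h')

theorem mul_sub_mul_ne_zero_of_ne (hi2 : i ^ 2 = -1) (ht0 : t ≠ 0) (hhi : h ≠ i) (hhni : h ≠ -i) :
    i * t - t * h ≠ 0 ∧ i * t + t * h ≠ 0 ∧ t - i * t * h ≠ 0 ∧ t + i * t * h ≠ 0 := by
  have hi0 : i ≠ 0 := by rintro rfl; norm_num at hi2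
  have hih : i + h ≠ 0 := fun h' => hhni (eq_neg_of_add_eq_zero_right h')
  refine ⟨?_, ?_, ?_, ?_⟩
  · rw [show i * t - t * h = t * (i - h) by ring]
    exact mul_ne_zero ht0 (sub_ne_zero.2 hhi.symm)
  · rw [show i * t + t * h = t * (i + h) by ring]
    exact mul_ne_zero ht0 hih
  · rw [show t - i * t * h = -(i * t * (i + h)) by linear_combination t * hi2]
    exact neg_ne_zero.2 (mul_ne_zero (mul_ne_zero hi0 ht0) hih)
  · rw [show t + i * t * h = i * t * (h - i) by linear_combination t * hi2]
    exact mul_ne_zero (mul_ne_zero hi0 ht0) (sub_ne_zero.2 hhi)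

end SquareRootOfMinusOne

end

theorem stmt_11 (q : ℕ) (hq_pp : IsPrimePow q) (hq1 : q % 4 = 1)
    (F : Type*) [Field F] [Fintype F] (hF : Fintype.card F = q ^ 2)
    (e : F) (he0 : e ≠ 0) (he : e ^ q = -e)
    (b₁ : F) (hb₁ : b₁ ^ q = b₁) (hb₁0 : b₁ ≠ 0)
    (i : F) (hi : i ^ q = i) (hi2 : i ^ 2 = -1)
    (h : F) (hh0 : h ≠ 0) (hh : h ^ q = -h)
    (s t k x : F)
    (ht_def : t = 2 * h ^ 2 * (i - 1) / (h ^ 2 + 1))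
    (hs_def : s = i * t)
    (hk_def : k = b₁ * e * (1 - h))
    (hx_def : x = 1 / k) :
    Admissible q x k h s t ∧
      memBM q 1 (b₁ * e) (ptP x k h) ∧ memBM q 1 (b₁ * e) (ptQ x k) ∧
      memBM q 1 (b₁ * e) ((0 : F), (0 : F)) ∧
      memBM q 1 (b₁ * e) ((0 : F), s) ∧ memBM q 1 (b₁ * e) ((0 : F), t) ∧
      memBM q 1 (b₁ * e) (ptM x k h s t) ∧ memBM q 1 (b₁ * e) (ptN x k h s t) := by
  obtain ⟨σ, hσ⟩ := exists_ringHom_pow_eq hq_pp hF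
  have hq0 : q ≠ 0 := by omega
  have h2 : (2 : F) ≠ 0 :=
    two_ne_zero_of_card_mod_two (by simp [hF, Nat.pow_mod, show q % 2 = 1 by omega])
  rw [hσ] at he hb₁ hi hh
  have hc : σ (b₁ * e) = -(b₁ * e) := by rw [map_mul, hb₁, he, mul_neg]
  have hhi : h ≠ i := ne_of_map_eq_neg h2 hh hh0 hi
  have hhni : h ≠ -i := ne_of_map_eq_neg h2 hh hh0 (by rw [map_neg, hi])
  have hh1 : h ≠ 1 := ne_of_map_eq_neg h2 hh hh0 (map_one σ)
  have hi1 : i ≠ 1 := by rintro rfl; exact h2 (by linear_combination hi2)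
  have hsq := sq_add_one_ne_zero_of_ne hi2 hhi hhni
  have ht0 : t ≠ 0 := ht_def ▸ div_ne_zero (by simp [h2, hh0, sub_ne_zero.2 hi1]) hsq
  have hσt : σ t = t := by rw [ht_def]; simp [map_div₀, map_ofNat, hh, hi]
  have hk0 : k ≠ 0 := by rw [hk_def]; simp [he0, hb₁0, sub_ne_zero.2 hh1.symm]
  have hxk : x * k = 1 := by rw [hx_def, one_div_mul_cancel hk0]
  have ht : t * (h ^ 2 + 1) = 2 * h ^ 2 * (i - 1) := by rw [ht_def, div_mul_cancel₀ _ hsq]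
  obtain ⟨hst, hts⟩ := unital_relations_of_mul_sq_add_one hi2 ht
  obtain ⟨hp, hm, hp', hm'⟩ := mul_sub_mul_ne_zero_of_ne hi2 ht0 hhi hhni
  subst hs_def
  have hσs : σ (i * t) = i * t := by rw [map_mul, hi, hσt]
  refine ⟨⟨by simp [hx_def, hk0], hk0, hh0, hh1, by rw [hσ, hσs], by rw [hσ, hσt],
    mul_ne_zero (by rintro rfl; norm_num at hi2) ht0, ht0, ?_, hp, hp'⟩,
    memBM_ptP hσ hc hh hxk hk_def, memBM_ptQ hσ hc hh hxk hk_def,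
    (memBM_zero_left_iff hq0 _ _ _).2 (zero_pow hq0),
    (memBM_zero_left_iff hq0 _ _ _).2 (by rw [hσ, hσs]),
    (memBM_zero_left_iff hq0 _ _ _).2 (by rw [hσ, hσt]),
    memBM_ptM hσ hc hh hσs hσt hp hm hst hxk hk_def, ?_⟩
  · exact fun h' => hi1 (mul_right_cancel₀ ht0 (by simpa using h'))
  · rw [ptN_eq_ptM]
    exact memBM_ptM hσ hc hh hσt hσs hp' hm' hts hxk hk_def
end

section
/- Let K be a finite field with q elements, where q ≡ 3 (mod 4) and q > 3. Then there exist X, Y ∈ K with X ∉ {0, −1}, Y ∉ {0, −1}, X² + Y² + X + Y = 0, and moreover necessarily X² ≠ Y². -/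
/-!
The line `X = t Y` through the origin meets the conic `X² + Y² + X + Y = 0` again at
`Y = -(t + 1) / (t² + 1)`, and `t² + 1 ≠ 0` because `-1` is not a square when `q ≡ 3 (mod 4)`.
Since `q > 3` there is a slope `t ∉ {0, 1, -1}`, and such a slope keeps both coordinates away
from `0` and `-1`. Finally `X² = Y²` forces `X = ±Y`, and the equation then reads
`2X(X + 1) = 0` or `2X² = 0`.
-/

lemma exists_ne_zero_ne_one_ne_neg_one {R : Type*} [Ring R] [Fintype R]
    (hR : 3 < Fintype.card R) : ∃ t : R, t ≠ 0 ∧ t ≠ 1 ∧ t ≠ -1 := by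
  classical
  have hlt : ({0, 1, -1} : Finset R).card < (Finset.univ : Finset R).card :=
    Finset.card_le_three.trans_lt (by rwa [Finset.card_univ])
  obtain ⟨t, -, ht⟩ := Finset.exists_mem_notMem_of_card_lt_card hlt
  simp only [Finset.mem_insert, Finset.mem_singleton, not_or] at ht
  exact ⟨t, ht⟩

lemma two_ne_zero_of_not_isSquare_neg_one {R : Type*} [CommRing R] (h : ¬ IsSquare (-1 : R)) :
    (2 : R) ≠ 0 := by
  intro h2
  exact h ⟨1, by linear_combination -h2⟩

lemma exists_conic_point_of_not_isSquare_neg_one {K : Type*} [Field K]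
    (hK : ¬ IsSquare (-1 : K)) {t : K} (ht0 : t ≠ 0) (ht1 : t ≠ 1) (htm1 : t ≠ -1) :
    ∃ X Y : K, X ≠ 0 ∧ X ≠ -1 ∧ Y ≠ 0 ∧ Y ≠ -1 ∧ X ^ 2 + Y ^ 2 + X + Y = 0 := by
  have hd : t ^ 2 + 1 ≠ 0 := fun h => hK ⟨t, by linear_combination -h - sq t⟩
  have htp1 : t + 1 ≠ 0 := fun h => htm1 (by linear_combination h)
  set Y : K := -(t + 1) / (t ^ 2 + 1) with hY
  have hY0 : Y ≠ 0 := div_ne_zero (neg_ne_zero.mpr htp1) hd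
  refine ⟨t * Y, Y, mul_ne_zero ht0 hY0, ?_, hY0, ?_, ?_⟩
  · intro h
    rw [hY, ← mul_div_assoc, div_eq_iff hd] at h
    exact ht1 (by linear_combination -h)
  · intro h
    rw [hY, div_eq_iff hd] at h
    have : t * (t - 1) = 0 := by linear_combination h
    rcases mul_eq_zero.mp this with h' | h'
    · exact ht0 h'
    · exact ht1 (by linear_combination h')
  · rw [hY]
    field_simp
    ring

lemma sq_ne_sq_of_conic {R : Type*} [CommRing R] [NoZeroDivisors R] (h2 : (2 : R) ≠ 0)
    {X Y : R} (hX0 : X ≠ 0) (hX1 : X ≠ -1) (h : X ^ 2 + Y ^ 2 + X + Y = 0) :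
    X ^ 2 ≠ Y ^ 2 := by
  intro hsq
  rcases sq_eq_sq_iff_eq_or_eq_neg.mp hsq with hXY | hXY
  · have : 2 * X * (X + 1) = 0 := by linear_combination h + (X + Y + 1) * hXY
    rcases mul_eq_zero.mp this with h' | h'
    · exact hX0 ((mul_eq_zero.mp h').resolve_left h2)
    · exact hX1 (by linear_combination h')
  · have : 2 * X ^ 2 = 0 := by linear_combination h + (X - Y - 1) * hXY
    exact hX0 (pow_eq_zero_iff two_ne_zero |>.mp ((mul_eq_zero.mp this).resolve_left h2))

theorem stmt_13_general (q : ℕ) (hq3 : q % 4 = 3) (hq : 3 < q)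
    (K : Type*) [Field K] [Fintype K] (hK : Fintype.card K = q) :
    ∃ X Y : K, X ≠ 0 ∧ X ≠ -1 ∧ Y ≠ 0 ∧ Y ≠ -1 ∧
      X ^ 2 + Y ^ 2 + X + Y = 0 ∧ X ^ 2 ≠ Y ^ 2 := by
  have hns : ¬ IsSquare (-1 : K) := by
    rw [FiniteField.isSquare_neg_one_iff, hK, hq3]
    exact fun h => h rfl
  obtain ⟨t, ht0, ht1, htm1⟩ := exists_ne_zero_ne_one_ne_neg_one (R := K) (hK ▸ hq)
  obtain ⟨X, Y, hX0, hX1, hY0, hY1, h⟩ :=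
    exists_conic_point_of_not_isSquare_neg_one hns ht0 ht1 htm1
  exact ⟨X, Y, hX0, hX1, hY0, hY1, h,
    sq_ne_sq_of_conic (two_ne_zero_of_not_isSquare_neg_one hns) hX0 hX1 h⟩

theorem stmt_13 (q : ℕ) (hq_pp : IsPrimePow q) (hq3 : q % 4 = 3) (hq : 3 < q)
    (K : Type*) [Field K] [Fintype K] (hK : Fintype.card K = q) :
    ∃ X Y : K, X ≠ 0 ∧ X ≠ -1 ∧ Y ≠ 0 ∧ Y ≠ -1 ∧
      X ^ 2 + Y ^ 2 + X + Y = 0 ∧ X ^ 2 ≠ Y ^ 2 :=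
  stmt_13_general q hq3 hq K hK
end

section
/- Let q be a prime power with q ≡ 3 (mod 4) and q > 3, and let F be a finite field with q² elements. Let a ∈ F be a nonzero square in F and let b ∈ F be such that the discriminant d = (b − b^q)² + 4·a^(q+1) is a nonsquare in 𝔽_q. Then the Buekenhout–Metz unital U_{a,b} contains a BM-special Triple O'Nan. -/
/-- Three points of `F × F` are collinear. -/
def Collin {F : Type*} [Field F] (A B C : F × F) : Prop :=
  (B.1 - A.1) * (C.2 - A.2) = (C.1 - A.1) * (B.2 - A.2)

/-- `(P, Q, X, Y, V, M, N)` is a BM-special Triple O'Nan in `U_{a,b}`: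
seven pairwise distinct points of the unital, with no three of `P, Q, X, Y`
collinear, `X` and `Y` having equal first coordinates, `V` collinear with `P, Q`
and with `X, Y`, `M` collinear with `P, X` and with `Q, Y`, and `N` collinear
with `P, Y` and with `Q, X`. -/
def TripleONan (q : ℕ) {F : Type*} [Field F] (a b : F)
    (P Q X Y V M N : F × F) : Prop :=
  List.Pairwise (· ≠ ·) [P, Q, X, Y, V, M, N] ∧
  memBM q a b P ∧ memBM q a b Q ∧ memBM q a b X ∧ memBM q a b Y ∧
  memBM q a b V ∧ memBM q a b M ∧ memBM q a b N ∧
  ¬ Collin P Q X ∧ ¬ Collin P Q Y ∧ ¬ Collin P X Y ∧ ¬ Collin Q X Y ∧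
  X.1 = Y.1 ∧
  Collin V P Q ∧ Collin V X Y ∧
  Collin M P X ∧ Collin M Q Y ∧
  Collin N P Y ∧ Collin N Q X

set_option maxHeartbeats 4000000 in
theorem stmt_14 (q : ℕ) (hq_pp : IsPrimePow q) (hq3 : q % 4 = 3) (hq : 3 < q)
    (F : Type*) [Field F] [Fintype F] (hF : Fintype.card F = q ^ 2)
    (a : F) (ha0 : a ≠ 0) (ha : ∃ w : F, a = w ^ 2)
    (b : F)
    (hd : ¬ ∃ w : F, w ^ q = w ∧ (b - b ^ q) ^ 2 + 4 * a ^ (q + 1) = w ^ 2) :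
    ∃ P Q X Y V M N : F × F, TripleONan q a b P Q X Y V M N := by
  classical
  clear hd
  obtain ⟨p, k, hpp, hkpos, hpk⟩ := hq_pp
  have hp' : Nat.Prime p := Nat.prime_iff.mpr hpp
  have hq0 : q ≠ 0 := by omega
  have hqodd : q % 2 = 1 := by omega
  -- characteristic
  haveI hcr : CharP F (ringChar F) := ringChar.charP F
  obtain ⟨n, hn1, hn2⟩ := FiniteField.card F (ringChar F)
  have hrp : ringChar F = p := by
    have h3 : (ringChar F) ^ (n : ℕ) = p ^ (2 * k) := by
      rw [← hn2, hF, ← hpk]; ring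
    have h4 : ringChar F ∣ p := by
      have h5 : ringChar F ∣ (ringChar F) ^ (n : ℕ) := dvd_pow_self _ n.pos.ne'
      rw [h3] at h5
      exact hn1.dvd_of_dvd_pow h5
    exact (Nat.prime_dvd_prime_iff_eq hn1 hp').mp h4
  haveI : CharP F p := hrp ▸ hcr
  haveI : Fact p.Prime := ⟨hp'⟩
  have hpdvdq : p ∣ q := by rw [← hpk]; exact dvd_pow_self p hkpos.ne'
  have hpodd : p ≠ 2 := by
    intro h; rw [h] at hpdvdq; omega
  have h2 : (2 : F) ≠ 0 := by
    intro h
    have h2' : ((2 : ℕ) : F) = 0 := by exact_mod_cast h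
    have := (CharP.cast_eq_zero_iff F p 2).mp h2'
    exact hpodd ((Nat.prime_dvd_prime_iff_eq hp' Nat.prime_two).mp this)
  have h4 : (4 : F) ≠ 0 := by
    have h44 : (4 : F) = 2 * 2 := by norm_num
    rw [h44]; exact mul_ne_zero h2 h2
  have h8 : (8 : F) ≠ 0 := by
    have h88 : (8 : F) = 2 * 2 * 2 := by norm_num
    rw [h88]; exact mul_ne_zero (mul_ne_zero h2 h2) h2
  -- Frobenius-power ring hom
  obtain ⟨φ, hφ⟩ : ∃ φ : F →+* F, ∀ z : F, φ z = z ^ q := by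
    refine ⟨{ toFun := fun z => z ^ q, map_one' := one_pow q,
              map_mul' := fun x y => mul_pow x y q,
              map_zero' := zero_pow hq0,
              map_add' := fun x y => by
                rw [← hpk]
                exact add_pow_char_pow (R := F) (x := x) (y := y) (p := p) (n := k) }, fun z => rfl⟩
  have hq' : ∀ z : F, z ^ q = φ z := fun z => (hφ z).symm
  have hL2q : ∀ z : F, z ^ (2 * q) = (φ z) ^ 2 := fun z => by
    rw [mul_comm 2 q, pow_mul, ← hq' z]
  have hLq1 : ∀ z : F, z ^ (q + 1) = φ z * z := fun z => by
    rw [pow_succ, ← hq' z]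
  have hcard : ∀ z : F, z ^ (q * q) = z := fun z => by
    have h := FiniteField.pow_card z
    rw [hF] at h
    rwa [pow_two] at h
  have hφφ : ∀ z : F, φ (φ z) = z := fun z => by
    rw [hφ, hφ, ← pow_mul]
    exact hcard z
  -- square root of -1
  obtain ⟨ε, hiε⟩ : IsSquare (-1 : F) := by
    rw [FiniteField.isSquare_neg_one_iff, hF, Nat.pow_mod, hq3]
    norm_num
  have hε : ε ^ 2 = -1 := by rw [sq]; exact hiε.symm
  have hε0 : ε ≠ 0 := by
    intro h; rw [h] at hε; norm_num at hε
  have hφε : φ ε = -ε := by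
    rw [hφ]
    obtain ⟨m4, hm4⟩ : ∃ m4, q = 4 * m4 + 3 := ⟨q / 4, by omega⟩
    have e4 : ε ^ 4 = 1 := by linear_combination (ε ^ 2 - 1) * hε
    have e3 : ε ^ 3 = -ε := by linear_combination ε * hε
    calc ε ^ q = (ε ^ 4) ^ m4 * ε ^ 3 := by rw [hm4, pow_add, pow_mul]
    _ = -ε := by rw [e4, one_pow, e3, one_mul]
  -- square root of a
  obtain ⟨s, rfl⟩ := ha
  have hs0 : s ≠ 0 := fun h => ha0 (by rw [h]; ring)
  have hs'0 : φ s ≠ 0 := fun h => hs0 (by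
    have h5 := congrArg φ h
    rwa [hφφ, map_zero] at h5)
  -- choice of c
  obtain ⟨z, hz⟩ : ∃ z : F, (Polynomial.eval z
      ((Polynomial.X ^ (q+1)) * ((Polynomial.X ^ (q+1) + Polynomial.C (1:F)) *
        (Polynomial.X ^ (q+1) + Polynomial.C (2:F))))) ≠ 0 := by
    apply Polynomial.exists_eval_ne_zero_of_natDegree_lt_card
    · refine mul_ne_zero (pow_ne_zero _ Polynomial.X_ne_zero) (mul_ne_zero ?_ ?_) <;>
        exact Polynomial.X_pow_add_C_ne_zero (by omega) _
    · rw [Cardinal.mk_fintype, hF]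
      have hdeg : (((Polynomial.X : Polynomial F) ^ (q+1)) * ((Polynomial.X ^ (q+1) + Polynomial.C (1:F)) *
          (Polynomial.X ^ (q+1) + Polynomial.C (2:F)))).natDegree = 3 * (q + 1) := by
        rw [Polynomial.natDegree_mul (pow_ne_zero _ Polynomial.X_ne_zero)
            (mul_ne_zero (Polynomial.X_pow_add_C_ne_zero (by omega) _)
              (Polynomial.X_pow_add_C_ne_zero (by omega) _)),
          Polynomial.natDegree_mul (Polynomial.X_pow_add_C_ne_zero (by omega) _)
            (Polynomial.X_pow_add_C_ne_zero (by omega) _),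
          Polynomial.natDegree_X_pow, Polynomial.natDegree_X_pow_add_C,
          Polynomial.natDegree_X_pow_add_C]
        ring
      rw [hdeg]
      exact_mod_cast Nat.cast_lt.mpr (by nlinarith : 3 * (q + 1) < q ^ 2)
  simp only [Polynomial.eval_mul, Polynomial.eval_add, Polynomial.eval_pow,
    Polynomial.eval_X, Polynomial.eval_C, Polynomial.eval_one, Polynomial.eval_ofNat] at hz
  rcases mul_ne_zero_iff.mp hz with ⟨hc0', hz2⟩
  rcases mul_ne_zero_iff.mp hz2 with ⟨hc1', hc2'⟩
  set c : F := z ^ (q + 1) with hcdef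
  have hc0 : c ≠ 0 := hc0'
  have hc1 : c + 1 ≠ 0 := hc1'
  have hc2 : c + 2 ≠ 0 := hc2'
  have hφc : φ c = c := by
    rw [hφ, hcdef, ← pow_mul]
    have hee : (q + 1) * q = q * q + q := by ring
    rw [hee, pow_add, hcard z, ← pow_succ']
  clear hz hz2 hc0' hc1' hc2'
  -- conjugation-derived nonvanishing facts
  have hconj : ∀ u v : F, u + ε * v = 0 → u - ε * v = 0 → (2:F) * u = 0 := by
    intro u v h1' h2'
    linear_combination h1' + h2'
  have h1m : (1 : F) - ε ≠ 0 := by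
    intro h
    have h5 := congrArg φ h
    simp only [map_sub, map_one, hφε, map_zero, sub_neg_eq_add] at h5
    exact h2 (by linear_combination h + h5)
  have h1p : (1 : F) + ε ≠ 0 := by
    intro h
    have h5 := congrArg φ h
    simp only [map_add, map_one, hφε, map_zero] at h5
    exact h2 (by linear_combination h + h5)
  have hu3 : (1 : F) + ε * (c + 1) ≠ 0 := by
    intro h
    have h5 := congrArg φ h
    simp only [map_add, map_mul, map_one, hφε, hφc, map_zero] at h5
    exact h2 (by linear_combination h + h5)
  have hu4 : (1 : F) - ε * (c + 1) ≠ 0 := by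
    intro h
    have h5 := congrArg φ h
    simp only [map_sub, map_add, map_mul, map_one, hφε, hφc, map_zero] at h5
    exact h2 (by linear_combination h + h5)
  have hf1 : c - ε * (c + 2) ≠ 0 := by
    intro h
    have h5 := congrArg φ h
    simp only [map_sub, map_add, map_mul, hφε, hφc, map_zero, map_ofNat] at h5
    exact (mul_ne_zero h2 hc0) (by linear_combination h + h5)
  have hf2 : c + ε * (c + 2) ≠ 0 := by
    intro h
    have h5 := congrArg φ h
    simp only [map_sub, map_add, map_mul, hφε, hφc, map_zero, map_ofNat] at h5
    exact (mul_ne_zero h2 hc0) (by linear_combination h + h5)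
  have hf3 : (c + 2) - ε * c ≠ 0 := by
    intro h
    have h5 := congrArg φ h
    simp only [map_sub, map_add, map_mul, hφε, hφc, map_zero, map_ofNat] at h5
    exact (mul_ne_zero h2 hc2) (by linear_combination h + h5)
  have hf4 : (c + 2) + ε * c ≠ 0 := by
    intro h
    have h5 := congrArg φ h
    simp only [map_sub, map_add, map_mul, hφε, hφc, map_zero, map_ofNat] at h5
    exact (mul_ne_zero h2 hc2) (by linear_combination h + h5)
  have hQc : c ^ 2 + 2 * c + 2 ≠ 0 := by
    intro h
    have key : (c + 1 - ε) * (c + 1 + ε) = 0 := by linear_combination h - hε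
    rcases mul_eq_zero.mp key with h1 | h1
    · have h5 := congrArg φ h1
      simp only [map_sub, map_add, map_one, hφε, hφc, map_zero, sub_neg_eq_add] at h5
      exact (mul_ne_zero h2 hc1) (by linear_combination h1 + h5)
    · have h5 := congrArg φ h1
      simp only [map_sub, map_add, map_one, hφε, hφc, map_zero] at h5
      exact (mul_ne_zero h2 hc1) (by linear_combination h1 + h5)
  have hNs : s * φ s ≠ 0 := mul_ne_zero hs0 hs'0

  have hnz0 : (2:F)*ε*(c^2+2*c+2)*φ s ≠ 0 := (mul_ne_zero (mul_ne_zero (mul_ne_zero h2 hε0) hQc) hs'0)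
  have hne_PQ : ((((c^2+2*c+2)*φ s*(1-ε)), ((s*φ s)*(c^2+2*c+2)*(1-ε)*(2*(s*φ s)*((c+2)-ε*c*(c+1))+(c^2+2*c+2)*(b-φ b)))) : F × F) ≠ (((c^2+2*c+2)*φ s*(1+ε)), ((s*φ s)*(c^2+2*c+2)*(1+ε)*(2*(s*φ s)*((c+2)+ε*c*(c+1))+(c^2+2*c+2)*(b-φ b)))) := by
    intro h
    have h1 : ((c^2+2*c+2)*φ s*(1-ε)) = ((c^2+2*c+2)*φ s*(1+ε)) := congrArg Prod.fst h
    exact hnz0 (by linear_combination (-1:F) * h1)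
  have hnz1 : (c^2+2*c+2)*φ s*(1-ε) ≠ 0 := (mul_ne_zero (mul_ne_zero hQc hs'0) h1m)
  have hne_PX : ((((c^2+2*c+2)*φ s*(1-ε)), ((s*φ s)*(c^2+2*c+2)*(1-ε)*(2*(s*φ s)*((c+2)-ε*c*(c+1))+(c^2+2*c+2)*(b-φ b)))) : F × F) ≠ ((0:F), (0:F)) := by
    intro h
    have h1 : ((c^2+2*c+2)*φ s*(1-ε)) = (0:F) := congrArg Prod.fst h
    exact hnz1 (by linear_combination h1)
  have hne_PY : ((((c^2+2*c+2)*φ s*(1-ε)), ((s*φ s)*(c^2+2*c+2)*(1-ε)*(2*(s*φ s)*((c+2)-ε*c*(c+1))+(c^2+2*c+2)*(b-φ b)))) : F × F) ≠ ((0:F), (8*(c+1)*(s*φ s)^2*(c^2+2*c+2))) := by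
    intro h
    have h1 : ((c^2+2*c+2)*φ s*(1-ε)) = (0:F) := congrArg Prod.fst h
    exact hnz1 (by linear_combination h1)
  have hne_PV : ((((c^2+2*c+2)*φ s*(1-ε)), ((s*φ s)*(c^2+2*c+2)*(1-ε)*(2*(s*φ s)*((c+2)-ε*c*(c+1))+(c^2+2*c+2)*(b-φ b)))) : F × F) ≠ ((0:F), (-(4*c*(c+1)*(s*φ s)^2*(c^2+2*c+2)))) := by
    intro h
    have h1 : ((c^2+2*c+2)*φ s*(1-ε)) = (0:F) := congrArg Prod.fst h
    exact hnz1 (by linear_combination h1)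
  have hnz2 : φ s*(c+2)*(c-ε*(c+2)) ≠ 0 := (mul_ne_zero (mul_ne_zero hs'0 hc2) hf1)
  have hne_PM : ((((c^2+2*c+2)*φ s*(1-ε)), ((s*φ s)*(c^2+2*c+2)*(1-ε)*(2*(s*φ s)*((c+2)-ε*c*(c+1))+(c^2+2*c+2)*(b-φ b)))) : F × F) ≠ ((2*φ s*(1+ε*(c+1))), (2*(s*φ s)*(1+ε*(c+1))*(2*(s*φ s)*((c+2)-ε*c*(c+1))+(c^2+2*c+2)*(b-φ b)))) := by
    intro h
    have h1 : ((c^2+2*c+2)*φ s*(1-ε)) = (2*φ s*(1+ε*(c+1))) := congrArg Prod.fst h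
    exact hnz2 (by linear_combination h1)
  have hnz3 : φ s*c*((c+2)-ε*c) ≠ 0 := (mul_ne_zero (mul_ne_zero hs'0 hc0) hf3)
  have hne_PN : ((((c^2+2*c+2)*φ s*(1-ε)), ((s*φ s)*(c^2+2*c+2)*(1-ε)*(2*(s*φ s)*((c+2)-ε*c*(c+1))+(c^2+2*c+2)*(b-φ b)))) : F × F) ≠ ((2*φ s*(1-ε*(c+1))), (2*(s*φ s)*(1-ε*(c+1))*(2*(s*φ s)*((c+2)+ε*c*(c+1))+(c^2+2*c+2)*(b-φ b)))) := by
    intro h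
    have h1 : ((c^2+2*c+2)*φ s*(1-ε)) = (2*φ s*(1-ε*(c+1))) := congrArg Prod.fst h
    exact hnz3 (by linear_combination h1)
  have hnz4 : (c^2+2*c+2)*φ s*(1+ε) ≠ 0 := (mul_ne_zero (mul_ne_zero hQc hs'0) h1p)
  have hne_QX : ((((c^2+2*c+2)*φ s*(1+ε)), ((s*φ s)*(c^2+2*c+2)*(1+ε)*(2*(s*φ s)*((c+2)+ε*c*(c+1))+(c^2+2*c+2)*(b-φ b)))) : F × F) ≠ ((0:F), (0:F)) := by
    intro h
    have h1 : ((c^2+2*c+2)*φ s*(1+ε)) = (0:F) := congrArg Prod.fst h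
    exact hnz4 (by linear_combination h1)
  have hne_QY : ((((c^2+2*c+2)*φ s*(1+ε)), ((s*φ s)*(c^2+2*c+2)*(1+ε)*(2*(s*φ s)*((c+2)+ε*c*(c+1))+(c^2+2*c+2)*(b-φ b)))) : F × F) ≠ ((0:F), (8*(c+1)*(s*φ s)^2*(c^2+2*c+2))) := by
    intro h
    have h1 : ((c^2+2*c+2)*φ s*(1+ε)) = (0:F) := congrArg Prod.fst h
    exact hnz4 (by linear_combination h1)
  have hne_QV : ((((c^2+2*c+2)*φ s*(1+ε)), ((s*φ s)*(c^2+2*c+2)*(1+ε)*(2*(s*φ s)*((c+2)+ε*c*(c+1))+(c^2+2*c+2)*(b-φ b)))) : F × F) ≠ ((0:F), (-(4*c*(c+1)*(s*φ s)^2*(c^2+2*c+2)))) := by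
    intro h
    have h1 : ((c^2+2*c+2)*φ s*(1+ε)) = (0:F) := congrArg Prod.fst h
    exact hnz4 (by linear_combination h1)
  have hnz5 : φ s*c*((c+2)+ε*c) ≠ 0 := (mul_ne_zero (mul_ne_zero hs'0 hc0) hf4)
  have hne_QM : ((((c^2+2*c+2)*φ s*(1+ε)), ((s*φ s)*(c^2+2*c+2)*(1+ε)*(2*(s*φ s)*((c+2)+ε*c*(c+1))+(c^2+2*c+2)*(b-φ b)))) : F × F) ≠ ((2*φ s*(1+ε*(c+1))), (2*(s*φ s)*(1+ε*(c+1))*(2*(s*φ s)*((c+2)-ε*c*(c+1))+(c^2+2*c+2)*(b-φ b)))) := by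
    intro h
    have h1 : ((c^2+2*c+2)*φ s*(1+ε)) = (2*φ s*(1+ε*(c+1))) := congrArg Prod.fst h
    exact hnz5 (by linear_combination h1)
  have hnz6 : φ s*(c+2)*(c+ε*(c+2)) ≠ 0 := (mul_ne_zero (mul_ne_zero hs'0 hc2) hf2)
  have hne_QN : ((((c^2+2*c+2)*φ s*(1+ε)), ((s*φ s)*(c^2+2*c+2)*(1+ε)*(2*(s*φ s)*((c+2)+ε*c*(c+1))+(c^2+2*c+2)*(b-φ b)))) : F × F) ≠ ((2*φ s*(1-ε*(c+1))), (2*(s*φ s)*(1-ε*(c+1))*(2*(s*φ s)*((c+2)+ε*c*(c+1))+(c^2+2*c+2)*(b-φ b)))) := by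
    intro h
    have h1 : ((c^2+2*c+2)*φ s*(1+ε)) = (2*φ s*(1-ε*(c+1))) := congrArg Prod.fst h
    exact hnz6 (by linear_combination h1)
  have hnz7 : (2:F)*(2:F)*(2:F)*(c+1)*(s*φ s)^2*(c^2+2*c+2) ≠ 0 := (mul_ne_zero (mul_ne_zero (mul_ne_zero (mul_ne_zero (mul_ne_zero h2 h2) h2) hc1) (pow_ne_zero 2 hNs)) hQc)
  have hne_XY : (((0:F), (0:F)) : F × F) ≠ ((0:F), (8*(c+1)*(s*φ s)^2*(c^2+2*c+2))) := by
    intro h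
    have h1 : (0:F) = (8*(c+1)*(s*φ s)^2*(c^2+2*c+2)) := congrArg Prod.snd h
    exact hnz7 (by linear_combination (-1:F) * h1)
  have hnz8 : (2:F)*(2:F)*c*(c+1)*(s*φ s)^2*(c^2+2*c+2) ≠ 0 := (mul_ne_zero (mul_ne_zero (mul_ne_zero (mul_ne_zero (mul_ne_zero h2 h2) hc0) hc1) (pow_ne_zero 2 hNs)) hQc)
  have hne_XV : (((0:F), (0:F)) : F × F) ≠ ((0:F), (-(4*c*(c+1)*(s*φ s)^2*(c^2+2*c+2)))) := by
    intro h
    have h1 : (0:F) = (-(4*c*(c+1)*(s*φ s)^2*(c^2+2*c+2))) := congrArg Prod.snd h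
    exact hnz8 (by linear_combination h1)
  have hnz9 : (2:F)*φ s*(1+ε*(c+1)) ≠ 0 := (mul_ne_zero (mul_ne_zero h2 hs'0) hu3)
  have hne_XM : (((0:F), (0:F)) : F × F) ≠ ((2*φ s*(1+ε*(c+1))), (2*(s*φ s)*(1+ε*(c+1))*(2*(s*φ s)*((c+2)-ε*c*(c+1))+(c^2+2*c+2)*(b-φ b)))) := by
    intro h
    have h1 : (0:F) = (2*φ s*(1+ε*(c+1))) := congrArg Prod.fst h
    exact hnz9 (by linear_combination (-1:F) * h1)
  have hnz10 : (2:F)*φ s*(1-ε*(c+1)) ≠ 0 := (mul_ne_zero (mul_ne_zero h2 hs'0) hu4)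
  have hne_XN : (((0:F), (0:F)) : F × F) ≠ ((2*φ s*(1-ε*(c+1))), (2*(s*φ s)*(1-ε*(c+1))*(2*(s*φ s)*((c+2)+ε*c*(c+1))+(c^2+2*c+2)*(b-φ b)))) := by
    intro h
    have h1 : (0:F) = (2*φ s*(1-ε*(c+1))) := congrArg Prod.fst h
    exact hnz10 (by linear_combination (-1:F) * h1)
  have hnz11 : (2:F)*(2:F)*(c+1)*(c+2)*(s*φ s)^2*(c^2+2*c+2) ≠ 0 := (mul_ne_zero (mul_ne_zero (mul_ne_zero (mul_ne_zero (mul_ne_zero h2 h2) hc1) hc2) (pow_ne_zero 2 hNs)) hQc)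
  have hne_YV : (((0:F), (8*(c+1)*(s*φ s)^2*(c^2+2*c+2))) : F × F) ≠ ((0:F), (-(4*c*(c+1)*(s*φ s)^2*(c^2+2*c+2)))) := by
    intro h
    have h1 : (8*(c+1)*(s*φ s)^2*(c^2+2*c+2)) = (-(4*c*(c+1)*(s*φ s)^2*(c^2+2*c+2))) := congrArg Prod.snd h
    exact hnz11 (by linear_combination h1)
  have hne_YM : (((0:F), (8*(c+1)*(s*φ s)^2*(c^2+2*c+2))) : F × F) ≠ ((2*φ s*(1+ε*(c+1))), (2*(s*φ s)*(1+ε*(c+1))*(2*(s*φ s)*((c+2)-ε*c*(c+1))+(c^2+2*c+2)*(b-φ b)))) := by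
    intro h
    have h1 : (0:F) = (2*φ s*(1+ε*(c+1))) := congrArg Prod.fst h
    exact hnz9 (by linear_combination (-1:F) * h1)
  have hne_YN : (((0:F), (8*(c+1)*(s*φ s)^2*(c^2+2*c+2))) : F × F) ≠ ((2*φ s*(1-ε*(c+1))), (2*(s*φ s)*(1-ε*(c+1))*(2*(s*φ s)*((c+2)+ε*c*(c+1))+(c^2+2*c+2)*(b-φ b)))) := by
    intro h
    have h1 : (0:F) = (2*φ s*(1-ε*(c+1))) := congrArg Prod.fst h
    exact hnz10 (by linear_combination (-1:F) * h1)
  have hne_VM : (((0:F), (-(4*c*(c+1)*(s*φ s)^2*(c^2+2*c+2)))) : F × F) ≠ ((2*φ s*(1+ε*(c+1))), (2*(s*φ s)*(1+ε*(c+1))*(2*(s*φ s)*((c+2)-ε*c*(c+1))+(c^2+2*c+2)*(b-φ b)))) := by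
    intro h
    have h1 : (0:F) = (2*φ s*(1+ε*(c+1))) := congrArg Prod.fst h
    exact hnz9 (by linear_combination (-1:F) * h1)
  have hne_VN : (((0:F), (-(4*c*(c+1)*(s*φ s)^2*(c^2+2*c+2)))) : F × F) ≠ ((2*φ s*(1-ε*(c+1))), (2*(s*φ s)*(1-ε*(c+1))*(2*(s*φ s)*((c+2)+ε*c*(c+1))+(c^2+2*c+2)*(b-φ b)))) := by
    intro h
    have h1 : (0:F) = (2*φ s*(1-ε*(c+1))) := congrArg Prod.fst h
    exact hnz10 (by linear_combination (-1:F) * h1)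
  have hnz12 : (2:F)*(2:F)*ε*(c+1)*φ s ≠ 0 := (mul_ne_zero (mul_ne_zero (mul_ne_zero (mul_ne_zero h2 h2) hε0) hc1) hs'0)
  have hne_MN : (((2*φ s*(1+ε*(c+1))), (2*(s*φ s)*(1+ε*(c+1))*(2*(s*φ s)*((c+2)-ε*c*(c+1))+(c^2+2*c+2)*(b-φ b)))) : F × F) ≠ ((2*φ s*(1-ε*(c+1))), (2*(s*φ s)*(1-ε*(c+1))*(2*(s*φ s)*((c+2)+ε*c*(c+1))+(c^2+2*c+2)*(b-φ b)))) := by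
    intro h
    have h1 : (2*φ s*(1+ε*(c+1))) = (2*φ s*(1-ε*(c+1))) := congrArg Prod.fst h
    exact hnz12 (by linear_combination h1)
  have hmem_P : memBM q (s^2) b ((((c^2+2*c+2)*φ s*(1-ε)), ((s*φ s)*(c^2+2*c+2)*(1-ε)*(2*(s*φ s)*((c+2)-ε*c*(c+1))+(c^2+2*c+2)*(b-φ b)))) : F × F) := by
    show s^2 * (((c^2+2*c+2)*φ s*(1-ε)))^2 - (s^2)^q * (((c^2+2*c+2)*φ s*(1-ε)))^(2*q) + (b - b^q) * (((c^2+2*c+2)*φ s*(1-ε)))^(q+1) = ((s*φ s)*(c^2+2*c+2)*(1-ε)*(2*(s*φ s)*((c+2)-ε*c*(c+1))+(c^2+2*c+2)*(b-φ b))) - (((s*φ s)*(c^2+2*c+2)*(1-ε)*(2*(s*φ s)*((c+2)-ε*c*(c+1))+(c^2+2*c+2)*(b-φ b))))^q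
    rw [hL2q (((c^2+2*c+2)*φ s*(1-ε))), hLq1 (((c^2+2*c+2)*φ s*(1-ε))), hq' (s^2), hq' b, hq' (((s*φ s)*(c^2+2*c+2)*(1-ε)*(2*(s*φ s)*((c+2)-ε*c*(c+1))+(c^2+2*c+2)*(b-φ b))))]
    simp only [map_mul, map_add, map_sub, map_neg, map_pow, map_one, map_ofNat, hφε, hφφ, hφc]
    linear_combination ((4:F)*(s)*(φ s)*(φ b) + (8:F)*(s)*(φ s)*(φ b)*(c) + (8:F)*(s)*(φ s)*(φ b)*(c)^2 + (4:F)*(s)*(φ s)*(φ b)*(c)^3 + (s)*(φ s)*(φ b)*(c)^4 + (-4:F)*(s)*(φ s)*(b) + (-8:F)*(s)*(φ s)*(b)*(c) + (-8:F)*(s)*(φ s)*(b)*(c)^2 + (-4:F)*(s)*(φ s)*(b)*(c)^3 + (-1:F)*(s)*(φ s)*(b)*(c)^4) * hε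
  have hmem_Q : memBM q (s^2) b ((((c^2+2*c+2)*φ s*(1+ε)), ((s*φ s)*(c^2+2*c+2)*(1+ε)*(2*(s*φ s)*((c+2)+ε*c*(c+1))+(c^2+2*c+2)*(b-φ b)))) : F × F) := by
    show s^2 * (((c^2+2*c+2)*φ s*(1+ε)))^2 - (s^2)^q * (((c^2+2*c+2)*φ s*(1+ε)))^(2*q) + (b - b^q) * (((c^2+2*c+2)*φ s*(1+ε)))^(q+1) = ((s*φ s)*(c^2+2*c+2)*(1+ε)*(2*(s*φ s)*((c+2)+ε*c*(c+1))+(c^2+2*c+2)*(b-φ b))) - (((s*φ s)*(c^2+2*c+2)*(1+ε)*(2*(s*φ s)*((c+2)+ε*c*(c+1))+(c^2+2*c+2)*(b-φ b))))^q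
    rw [hL2q (((c^2+2*c+2)*φ s*(1+ε))), hLq1 (((c^2+2*c+2)*φ s*(1+ε))), hq' (s^2), hq' b, hq' (((s*φ s)*(c^2+2*c+2)*(1+ε)*(2*(s*φ s)*((c+2)+ε*c*(c+1))+(c^2+2*c+2)*(b-φ b))))]
    simp only [map_mul, map_add, map_sub, map_neg, map_pow, map_one, map_ofNat, hφε, hφφ, hφc]
    linear_combination ((4:F)*(s)*(φ s)*(φ b) + (8:F)*(s)*(φ s)*(φ b)*(c) + (8:F)*(s)*(φ s)*(φ b)*(c)^2 + (4:F)*(s)*(φ s)*(φ b)*(c)^3 + (s)*(φ s)*(φ b)*(c)^4 + (-4:F)*(s)*(φ s)*(b) + (-8:F)*(s)*(φ s)*(b)*(c) + (-8:F)*(s)*(φ s)*(b)*(c)^2 + (-4:F)*(s)*(φ s)*(b)*(c)^3 + (-1:F)*(s)*(φ s)*(b)*(c)^4) * hε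
  have hmem_X : memBM q (s^2) b (((0:F), (0:F)) : F × F) := by
    show s^2 * ((0:F))^2 - (s^2)^q * ((0:F))^(2*q) + (b - b^q) * ((0:F))^(q+1) = (0:F) - ((0:F))^q
    rw [zero_pow (by omega : 2*q ≠ 0), zero_pow (by omega : q+1 ≠ 0), hq' ((0:F))]
    rw [map_zero]
    ring
  have hmem_Y : memBM q (s^2) b (((0:F), (8*(c+1)*(s*φ s)^2*(c^2+2*c+2))) : F × F) := by
    show s^2 * ((0:F))^2 - (s^2)^q * ((0:F))^(2*q) + (b - b^q) * ((0:F))^(q+1) = (8*(c+1)*(s*φ s)^2*(c^2+2*c+2)) - ((8*(c+1)*(s*φ s)^2*(c^2+2*c+2)))^q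
    rw [zero_pow (by omega : 2*q ≠ 0), zero_pow (by omega : q+1 ≠ 0), hq' ((8*(c+1)*(s*φ s)^2*(c^2+2*c+2)))]
    simp only [map_mul, map_add, map_sub, map_neg, map_pow, map_one, map_ofNat, hφε, hφφ, hφc]
    ring
  have hmem_V : memBM q (s^2) b (((0:F), (-(4*c*(c+1)*(s*φ s)^2*(c^2+2*c+2)))) : F × F) := by
    show s^2 * ((0:F))^2 - (s^2)^q * ((0:F))^(2*q) + (b - b^q) * ((0:F))^(q+1) = (-(4*c*(c+1)*(s*φ s)^2*(c^2+2*c+2))) - ((-(4*c*(c+1)*(s*φ s)^2*(c^2+2*c+2))))^q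
    rw [zero_pow (by omega : 2*q ≠ 0), zero_pow (by omega : q+1 ≠ 0), hq' ((-(4*c*(c+1)*(s*φ s)^2*(c^2+2*c+2))))]
    simp only [map_mul, map_add, map_sub, map_neg, map_pow, map_one, map_ofNat, hφε, hφφ, hφc]
    ring
  have hmem_M : memBM q (s^2) b (((2*φ s*(1+ε*(c+1))), (2*(s*φ s)*(1+ε*(c+1))*(2*(s*φ s)*((c+2)-ε*c*(c+1))+(c^2+2*c+2)*(b-φ b)))) : F × F) := by
    show s^2 * ((2*φ s*(1+ε*(c+1))))^2 - (s^2)^q * ((2*φ s*(1+ε*(c+1))))^(2*q) + (b - b^q) * ((2*φ s*(1+ε*(c+1))))^(q+1) = (2*(s*φ s)*(1+ε*(c+1))*(2*(s*φ s)*((c+2)-ε*c*(c+1))+(c^2+2*c+2)*(b-φ b))) - ((2*(s*φ s)*(1+ε*(c+1))*(2*(s*φ s)*((c+2)-ε*c*(c+1))+(c^2+2*c+2)*(b-φ b))))^q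
    rw [hL2q ((2*φ s*(1+ε*(c+1)))), hLq1 ((2*φ s*(1+ε*(c+1)))), hq' (s^2), hq' b, hq' ((2*(s*φ s)*(1+ε*(c+1))*(2*(s*φ s)*((c+2)-ε*c*(c+1))+(c^2+2*c+2)*(b-φ b))))]
    simp only [map_mul, map_add, map_sub, map_neg, map_pow, map_one, map_ofNat, hφε, hφφ, hφc]
    linear_combination ((4:F)*(s)*(φ s)*(φ b) + (8:F)*(s)*(φ s)*(φ b)*(c) + (4:F)*(s)*(φ s)*(φ b)*(c)^2 + (-4:F)*(s)*(φ s)*(b) + (-8:F)*(s)*(φ s)*(b)*(c) + (-4:F)*(s)*(φ s)*(b)*(c)^2) * hε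
  have hmem_N : memBM q (s^2) b (((2*φ s*(1-ε*(c+1))), (2*(s*φ s)*(1-ε*(c+1))*(2*(s*φ s)*((c+2)+ε*c*(c+1))+(c^2+2*c+2)*(b-φ b)))) : F × F) := by
    show s^2 * ((2*φ s*(1-ε*(c+1))))^2 - (s^2)^q * ((2*φ s*(1-ε*(c+1))))^(2*q) + (b - b^q) * ((2*φ s*(1-ε*(c+1))))^(q+1) = (2*(s*φ s)*(1-ε*(c+1))*(2*(s*φ s)*((c+2)+ε*c*(c+1))+(c^2+2*c+2)*(b-φ b))) - ((2*(s*φ s)*(1-ε*(c+1))*(2*(s*φ s)*((c+2)+ε*c*(c+1))+(c^2+2*c+2)*(b-φ b))))^q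
    rw [hL2q ((2*φ s*(1-ε*(c+1)))), hLq1 ((2*φ s*(1-ε*(c+1)))), hq' (s^2), hq' b, hq' ((2*(s*φ s)*(1-ε*(c+1))*(2*(s*φ s)*((c+2)+ε*c*(c+1))+(c^2+2*c+2)*(b-φ b))))]
    simp only [map_mul, map_add, map_sub, map_neg, map_pow, map_one, map_ofNat, hφε, hφφ, hφc]
    linear_combination ((4:F)*(s)*(φ s)*(φ b) + (8:F)*(s)*(φ s)*(φ b)*(c) + (4:F)*(s)*(φ s)*(φ b)*(c)^2 + (-4:F)*(s)*(φ s)*(b) + (-8:F)*(s)*(φ s)*(b)*(c) + (-4:F)*(s)*(φ s)*(b)*(c)^2) * hε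
  have hcol_VPQ : Collin (((0:F), (-(4*c*(c+1)*(s*φ s)^2*(c^2+2*c+2)))) : F × F) (((c^2+2*c+2)*φ s*(1-ε)), ((s*φ s)*(c^2+2*c+2)*(1-ε)*(2*(s*φ s)*((c+2)-ε*c*(c+1))+(c^2+2*c+2)*(b-φ b)))) (((c^2+2*c+2)*φ s*(1+ε)), ((s*φ s)*(c^2+2*c+2)*(1+ε)*(2*(s*φ s)*((c+2)+ε*c*(c+1))+(c^2+2*c+2)*(b-φ b)))) := by
    show (((c^2+2*c+2)*φ s*(1-ε)) - (0:F)) * (((s*φ s)*(c^2+2*c+2)*(1+ε)*(2*(s*φ s)*((c+2)+ε*c*(c+1))+(c^2+2*c+2)*(b-φ b))) - (-(4*c*(c+1)*(s*φ s)^2*(c^2+2*c+2)))) = (((c^2+2*c+2)*φ s*(1+ε)) - (0:F)) * (((s*φ s)*(c^2+2*c+2)*(1-ε)*(2*(s*φ s)*((c+2)-ε*c*(c+1))+(c^2+2*c+2)*(b-φ b))) - (-(4*c*(c+1)*(s*φ s)^2*(c^2+2*c+2))))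
    linear_combination ((-16:F)*(ε)*(s)^2*(φ s)^3*(c) + (-48:F)*(ε)*(s)^2*(φ s)^3*(c)^2 + (-64:F)*(ε)*(s)^2*(φ s)^3*(c)^3 + (-48:F)*(ε)*(s)^2*(φ s)^3*(c)^4 + (-20:F)*(ε)*(s)^2*(φ s)^3*(c)^5 + (-4:F)*(ε)*(s)^2*(φ s)^3*(c)^6) * hε
  have hcol_MPX : Collin (((2*φ s*(1+ε*(c+1))), (2*(s*φ s)*(1+ε*(c+1))*(2*(s*φ s)*((c+2)-ε*c*(c+1))+(c^2+2*c+2)*(b-φ b)))) : F × F) (((c^2+2*c+2)*φ s*(1-ε)), ((s*φ s)*(c^2+2*c+2)*(1-ε)*(2*(s*φ s)*((c+2)-ε*c*(c+1))+(c^2+2*c+2)*(b-φ b)))) ((0:F), (0:F)) := by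
    show (((c^2+2*c+2)*φ s*(1-ε)) - (2*φ s*(1+ε*(c+1)))) * ((0:F) - (2*(s*φ s)*(1+ε*(c+1))*(2*(s*φ s)*((c+2)-ε*c*(c+1))+(c^2+2*c+2)*(b-φ b)))) = ((0:F) - (2*φ s*(1+ε*(c+1)))) * (((s*φ s)*(c^2+2*c+2)*(1-ε)*(2*(s*φ s)*((c+2)-ε*c*(c+1))+(c^2+2*c+2)*(b-φ b))) - (2*(s*φ s)*(1+ε*(c+1))*(2*(s*φ s)*((c+2)-ε*c*(c+1))+(c^2+2*c+2)*(b-φ b))))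
    ring
  have hcol_MQY : Collin (((2*φ s*(1+ε*(c+1))), (2*(s*φ s)*(1+ε*(c+1))*(2*(s*φ s)*((c+2)-ε*c*(c+1))+(c^2+2*c+2)*(b-φ b)))) : F × F) (((c^2+2*c+2)*φ s*(1+ε)), ((s*φ s)*(c^2+2*c+2)*(1+ε)*(2*(s*φ s)*((c+2)+ε*c*(c+1))+(c^2+2*c+2)*(b-φ b)))) ((0:F), (8*(c+1)*(s*φ s)^2*(c^2+2*c+2))) := by
    show (((c^2+2*c+2)*φ s*(1+ε)) - (2*φ s*(1+ε*(c+1)))) * ((8*(c+1)*(s*φ s)^2*(c^2+2*c+2)) - (2*(s*φ s)*(1+ε*(c+1))*(2*(s*φ s)*((c+2)-ε*c*(c+1))+(c^2+2*c+2)*(b-φ b)))) = ((0:F) - (2*φ s*(1+ε*(c+1)))) * (((s*φ s)*(c^2+2*c+2)*(1+ε)*(2*(s*φ s)*((c+2)+ε*c*(c+1))+(c^2+2*c+2)*(b-φ b))) - (2*(s*φ s)*(1+ε*(c+1))*(2*(s*φ s)*((c+2)-ε*c*(c+1))+(c^2+2*c+2)*(b-φ b))))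
    linear_combination ((32:F)*(s)^2*(φ s)^3*(c) + (80:F)*(s)^2*(φ s)^3*(c)^2 + (80:F)*(s)^2*(φ s)^3*(c)^3 + (40:F)*(s)^2*(φ s)^3*(c)^4 + (8:F)*(s)^2*(φ s)^3*(c)^5 + (16:F)*(ε)*(s)^2*(φ s)^3*(c) + (48:F)*(ε)*(s)^2*(φ s)^3*(c)^2 + (56:F)*(ε)*(s)^2*(φ s)^3*(c)^3 + (32:F)*(ε)*(s)^2*(φ s)^3*(c)^4 + (8:F)*(ε)*(s)^2*(φ s)^3*(c)^5) * hε
  have hcol_NPY : Collin (((2*φ s*(1-ε*(c+1))), (2*(s*φ s)*(1-ε*(c+1))*(2*(s*φ s)*((c+2)+ε*c*(c+1))+(c^2+2*c+2)*(b-φ b)))) : F × F) (((c^2+2*c+2)*φ s*(1-ε)), ((s*φ s)*(c^2+2*c+2)*(1-ε)*(2*(s*φ s)*((c+2)-ε*c*(c+1))+(c^2+2*c+2)*(b-φ b)))) ((0:F), (8*(c+1)*(s*φ s)^2*(c^2+2*c+2))) := by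
    show (((c^2+2*c+2)*φ s*(1-ε)) - (2*φ s*(1-ε*(c+1)))) * ((8*(c+1)*(s*φ s)^2*(c^2+2*c+2)) - (2*(s*φ s)*(1-ε*(c+1))*(2*(s*φ s)*((c+2)+ε*c*(c+1))+(c^2+2*c+2)*(b-φ b)))) = ((0:F) - (2*φ s*(1-ε*(c+1)))) * (((s*φ s)*(c^2+2*c+2)*(1-ε)*(2*(s*φ s)*((c+2)-ε*c*(c+1))+(c^2+2*c+2)*(b-φ b))) - (2*(s*φ s)*(1-ε*(c+1))*(2*(s*φ s)*((c+2)+ε*c*(c+1))+(c^2+2*c+2)*(b-φ b))))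
    linear_combination ((32:F)*(s)^2*(φ s)^3*(c) + (80:F)*(s)^2*(φ s)^3*(c)^2 + (80:F)*(s)^2*(φ s)^3*(c)^3 + (40:F)*(s)^2*(φ s)^3*(c)^4 + (8:F)*(s)^2*(φ s)^3*(c)^5 + (-16:F)*(ε)*(s)^2*(φ s)^3*(c) + (-48:F)*(ε)*(s)^2*(φ s)^3*(c)^2 + (-56:F)*(ε)*(s)^2*(φ s)^3*(c)^3 + (-32:F)*(ε)*(s)^2*(φ s)^3*(c)^4 + (-8:F)*(ε)*(s)^2*(φ s)^3*(c)^5) * hε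
  have hcol_NQX : Collin (((2*φ s*(1-ε*(c+1))), (2*(s*φ s)*(1-ε*(c+1))*(2*(s*φ s)*((c+2)+ε*c*(c+1))+(c^2+2*c+2)*(b-φ b)))) : F × F) (((c^2+2*c+2)*φ s*(1+ε)), ((s*φ s)*(c^2+2*c+2)*(1+ε)*(2*(s*φ s)*((c+2)+ε*c*(c+1))+(c^2+2*c+2)*(b-φ b)))) ((0:F), (0:F)) := by
    show (((c^2+2*c+2)*φ s*(1+ε)) - (2*φ s*(1-ε*(c+1)))) * ((0:F) - (2*(s*φ s)*(1-ε*(c+1))*(2*(s*φ s)*((c+2)+ε*c*(c+1))+(c^2+2*c+2)*(b-φ b)))) = ((0:F) - (2*φ s*(1-ε*(c+1)))) * (((s*φ s)*(c^2+2*c+2)*(1+ε)*(2*(s*φ s)*((c+2)+ε*c*(c+1))+(c^2+2*c+2)*(b-φ b))) - (2*(s*φ s)*(1-ε*(c+1))*(2*(s*φ s)*((c+2)+ε*c*(c+1))+(c^2+2*c+2)*(b-φ b))))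
    ring
  have hcol_VXY : Collin (((0:F), (-(4*c*(c+1)*(s*φ s)^2*(c^2+2*c+2)))) : F × F) ((0:F), (0:F)) ((0:F), (8*(c+1)*(s*φ s)^2*(c^2+2*c+2))) := by
    show ((0:F) - (0:F)) * ((8*(c+1)*(s*φ s)^2*(c^2+2*c+2)) - (-(4*c*(c+1)*(s*φ s)^2*(c^2+2*c+2)))) = ((0:F) - (0:F)) * ((0:F) - (-(4*c*(c+1)*(s*φ s)^2*(c^2+2*c+2))))
    ring
  have hnz13 : (2:F)*(2:F)*(2:F)*ε*c*(c+1)*(s*φ s)^2*φ s*(c^2+2*c+2)^2 ≠ 0 := (mul_ne_zero (mul_ne_zero (mul_ne_zero (mul_ne_zero (mul_ne_zero (mul_ne_zero (mul_ne_zero (mul_ne_zero h2 h2) h2) hε0) hc0) hc1) (pow_ne_zero 2 hNs)) hs'0) (pow_ne_zero 2 hQc))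
  have hnc_PQX : ¬ Collin ((((c^2+2*c+2)*φ s*(1-ε)), ((s*φ s)*(c^2+2*c+2)*(1-ε)*(2*(s*φ s)*((c+2)-ε*c*(c+1))+(c^2+2*c+2)*(b-φ b)))) : F × F) (((c^2+2*c+2)*φ s*(1+ε)), ((s*φ s)*(c^2+2*c+2)*(1+ε)*(2*(s*φ s)*((c+2)+ε*c*(c+1))+(c^2+2*c+2)*(b-φ b)))) ((0:F), (0:F)) := by
    intro hcol
    have h1 : (((c^2+2*c+2)*φ s*(1+ε)) - ((c^2+2*c+2)*φ s*(1-ε))) * ((0:F) - ((s*φ s)*(c^2+2*c+2)*(1-ε)*(2*(s*φ s)*((c+2)-ε*c*(c+1))+(c^2+2*c+2)*(b-φ b)))) = ((0:F) - ((c^2+2*c+2)*φ s*(1-ε))) * (((s*φ s)*(c^2+2*c+2)*(1+ε)*(2*(s*φ s)*((c+2)+ε*c*(c+1))+(c^2+2*c+2)*(b-φ b))) - ((s*φ s)*(c^2+2*c+2)*(1-ε)*(2*(s*φ s)*((c+2)-ε*c*(c+1))+(c^2+2*c+2)*(b-φ b)))) := hcol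
    exact hnz13 (by linear_combination h1 + ((16:F)*(ε)*(s)^2*(φ s)^3*(c) + (48:F)*(ε)*(s)^2*(φ s)^3*(c)^2 + (64:F)*(ε)*(s)^2*(φ s)^3*(c)^3 + (48:F)*(ε)*(s)^2*(φ s)^3*(c)^4 + (20:F)*(ε)*(s)^2*(φ s)^3*(c)^5 + (4:F)*(ε)*(s)^2*(φ s)^3*(c)^6) * hε)
  have hnz14 : (2:F)*(2:F)*(2:F)*ε*(c+1)*(c+2)*(s*φ s)^2*φ s*(c^2+2*c+2)^2 ≠ 0 := (mul_ne_zero (mul_ne_zero (mul_ne_zero (mul_ne_zero (mul_ne_zero (mul_ne_zero (mul_ne_zero (mul_ne_zero h2 h2) h2) hε0) hc1) hc2) (pow_ne_zero 2 hNs)) hs'0) (pow_ne_zero 2 hQc))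
  have hnc_PQY : ¬ Collin ((((c^2+2*c+2)*φ s*(1-ε)), ((s*φ s)*(c^2+2*c+2)*(1-ε)*(2*(s*φ s)*((c+2)-ε*c*(c+1))+(c^2+2*c+2)*(b-φ b)))) : F × F) (((c^2+2*c+2)*φ s*(1+ε)), ((s*φ s)*(c^2+2*c+2)*(1+ε)*(2*(s*φ s)*((c+2)+ε*c*(c+1))+(c^2+2*c+2)*(b-φ b)))) ((0:F), (8*(c+1)*(s*φ s)^2*(c^2+2*c+2))) := by
    intro hcol
    have h1 : (((c^2+2*c+2)*φ s*(1+ε)) - ((c^2+2*c+2)*φ s*(1-ε))) * ((8*(c+1)*(s*φ s)^2*(c^2+2*c+2)) - ((s*φ s)*(c^2+2*c+2)*(1-ε)*(2*(s*φ s)*((c+2)-ε*c*(c+1))+(c^2+2*c+2)*(b-φ b)))) = ((0:F) - ((c^2+2*c+2)*φ s*(1-ε))) * (((s*φ s)*(c^2+2*c+2)*(1+ε)*(2*(s*φ s)*((c+2)+ε*c*(c+1))+(c^2+2*c+2)*(b-φ b))) - ((s*φ s)*(c^2+2*c+2)*(1-ε)*(2*(s*φ s)*((c+2)-ε*c*(c+1))+(c^2+2*c+2)*(b-φ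 b)))) := hcol
    exact hnz14 (by linear_combination h1 + ((16:F)*(ε)*(s)^2*(φ s)^3*(c) + (48:F)*(ε)*(s)^2*(φ s)^3*(c)^2 + (64:F)*(ε)*(s)^2*(φ s)^3*(c)^3 + (48:F)*(ε)*(s)^2*(φ s)^3*(c)^4 + (20:F)*(ε)*(s)^2*(φ s)^3*(c)^5 + (4:F)*(ε)*(s)^2*(φ s)^3*(c)^6) * hε)
  have hnz15 : (2:F)*(2:F)*(2:F)*(1-ε)*(c+1)*(s*φ s)^2*φ s*(c^2+2*c+2)^2 ≠ 0 := (mul_ne_zero (mul_ne_zero (mul_ne_zero (mul_ne_zero (mul_ne_zero (mul_ne_zero (mul_ne_zero h2 h2) h2) h1m) hc1) (pow_ne_zero 2 hNs)) hs'0) (pow_ne_zero 2 hQc))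
  have hnc_PXY : ¬ Collin ((((c^2+2*c+2)*φ s*(1-ε)), ((s*φ s)*(c^2+2*c+2)*(1-ε)*(2*(s*φ s)*((c+2)-ε*c*(c+1))+(c^2+2*c+2)*(b-φ b)))) : F × F) ((0:F), (0:F)) ((0:F), (8*(c+1)*(s*φ s)^2*(c^2+2*c+2))) := by
    intro hcol
    have h1 : ((0:F) - ((c^2+2*c+2)*φ s*(1-ε))) * ((8*(c+1)*(s*φ s)^2*(c^2+2*c+2)) - ((s*φ s)*(c^2+2*c+2)*(1-ε)*(2*(s*φ s)*((c+2)-ε*c*(c+1))+(c^2+2*c+2)*(b-φ b)))) = ((0:F) - ((c^2+2*c+2)*φ s*(1-ε))) * ((0:F) - ((s*φ s)*(c^2+2*c+2)*(1-ε)*(2*(s*φ s)*((c+2)-ε*c*(c+1))+(c^2+2*c+2)*(b-φ b)))) := hcol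
    exact hnz15 (by linear_combination (-1:F) * h1)
  have hnz16 : (2:F)*(2:F)*(2:F)*(1+ε)*(c+1)*(s*φ s)^2*φ s*(c^2+2*c+2)^2 ≠ 0 := (mul_ne_zero (mul_ne_zero (mul_ne_zero (mul_ne_zero (mul_ne_zero (mul_ne_zero (mul_ne_zero h2 h2) h2) h1p) hc1) (pow_ne_zero 2 hNs)) hs'0) (pow_ne_zero 2 hQc))
  have hnc_QXY : ¬ Collin ((((c^2+2*c+2)*φ s*(1+ε)), ((s*φ s)*(c^2+2*c+2)*(1+ε)*(2*(s*φ s)*((c+2)+ε*c*(c+1))+(c^2+2*c+2)*(b-φ b)))) : F × F) ((0:F), (0:F)) ((0:F), (8*(c+1)*(s*φ s)^2*(c^2+2*c+2))) := by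
    intro hcol
    have h1 : ((0:F) - ((c^2+2*c+2)*φ s*(1+ε))) * ((8*(c+1)*(s*φ s)^2*(c^2+2*c+2)) - ((s*φ s)*(c^2+2*c+2)*(1+ε)*(2*(s*φ s)*((c+2)+ε*c*(c+1))+(c^2+2*c+2)*(b-φ b)))) = ((0:F) - ((c^2+2*c+2)*φ s*(1+ε))) * ((0:F) - ((s*φ s)*(c^2+2*c+2)*(1+ε)*(2*(s*φ s)*((c+2)+ε*c*(c+1))+(c^2+2*c+2)*(b-φ b)))) := hcol
    exact hnz16 (by linear_combination (-1:F) * h1)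
  refine ⟨(((c^2+2*c+2)*φ s*(1-ε)), ((s*φ s)*(c^2+2*c+2)*(1-ε)*(2*(s*φ s)*((c+2)-ε*c*(c+1))+(c^2+2*c+2)*(b-φ b)))), (((c^2+2*c+2)*φ s*(1+ε)), ((s*φ s)*(c^2+2*c+2)*(1+ε)*(2*(s*φ s)*((c+2)+ε*c*(c+1))+(c^2+2*c+2)*(b-φ b)))), ((0:F), (0:F)), ((0:F), (8*(c+1)*(s*φ s)^2*(c^2+2*c+2))), ((0:F), (-(4*c*(c+1)*(s*φ s)^2*(c^2+2*c+2)))), ((2*φ s*(1+ε*(c+1))), (2*(s*φ s)*(1+ε*(c+1))*(2*(s*φ s)*((c+2)-ε*c*(c+1))+(c^2+2*c+2)*(b-φ b)))), ((2*φ s*(1-ε*(c+1))), (2*(s*φ s)*(1-ε*(c+1))*(2*(s*φ s)*((c+2)+ε*c*(c+1))+(c^2+2*c+2)*(b-φ b)))), ?_⟩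
  unfold TripleONan
  refine ⟨?_, hmem_P, hmem_Q, hmem_X, hmem_Y, hmem_V, hmem_M, hmem_N, hnc_PQX, hnc_PQY, hnc_PXY, hnc_QXY, rfl, hcol_VPQ, hcol_VXY, hcol_MPX, hcol_MQY, hcol_NPY, hcol_NQX⟩
  -- pairwise distinctness
  refine List.pairwise_cons.mpr ⟨?_, List.pairwise_cons.mpr ⟨?_, List.pairwise_cons.mpr ⟨?_, List.pairwise_cons.mpr ⟨?_, List.pairwise_cons.mpr ⟨?_, List.pairwise_cons.mpr ⟨?_, List.pairwise_singleton _ _⟩⟩⟩⟩⟩⟩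
  · intro x hx
    simp only [List.mem_cons, List.mem_singleton, List.not_mem_nil, or_false] at hx
    rcases hx with rfl | rfl | rfl | rfl | rfl | rfl
    · exact hne_PQ
    · exact hne_PX
    · exact hne_PY
    · exact hne_PV
    · exact hne_PM
    · exact hne_PN
  · intro x hx
    simp only [List.mem_cons, List.mem_singleton, List.not_mem_nil, or_false] at hx
    rcases hx with rfl | rfl | rfl | rfl | rfl
    · exact hne_QX
    · exact hne_QY
    · exact hne_QV
    · exact hne_QM
    · exact hne_QN
  · intro x hx
    simp only [List.mem_cons, List.mem_singleton, List.not_mem_nil, or_false] at hx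
    rcases hx with rfl | rfl | rfl | rfl
    · exact hne_XY
    · exact hne_XV
    · exact hne_XM
    · exact hne_XN
  · intro x hx
    simp only [List.mem_cons, List.mem_singleton, List.not_mem_nil, or_false] at hx
    rcases hx with rfl | rfl | rfl
    · exact hne_YV
    · exact hne_YM
    · exact hne_YN
  · intro x hx
    simp only [List.mem_cons, List.mem_singleton, List.not_mem_nil, or_false] at hx
    rcases hx with rfl | rfl
    · exact hne_VM
    · exact hne_VN
  · intro x hx
    simp only [List.mem_cons, List.mem_singleton, List.not_mem_nil, or_false] at hx
    rcases hx with rfl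
    · exact hne_MN
end

section
/- Let q be an odd prime power, F a finite field with q² elements, and let (x, k, h, s, t) be an admissible tuple with additionally s + t ≠ 0. Then the point F₀ = (0, 2·s·t/(s + t)) is collinear with the two associated configuration points M = (k·x·W, k·W + U₀) and N = (k·x·V, k·V + Z); moreover, for all a, b ∈ F the point F₀ lies in the Buekenhout–Metz unital U_{a,b}. (Thus the intersection of the line MN with the line XY of a BM-special Triple O'Nan is always a point of the unital.) -/
/-!
The point `F₀ = (0, 2st/(s+t))` lies on the axis `x = 0`, where the equation of every
Buekenhout–Metz unital degenerates to `y = y ^ q`, i.e. `y ∈ 𝔽_q`. Since `z ↦ z ^ q` is a field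
endomorphism of `F`, the harmonic-mean expression `2st/(s+t)` is fixed by it as soon as `s` and
`t` are. Collinearity of `F₀`, `M`, `N` is an identity of rational functions in `k, x, h, s, t`,
valid wherever the denominators `s - th`, `t - sh`, `s + t` do not vanish.
-/

theorem FiniteField.exists_ringHom_eq_pow_of_card_eq_pow {F : Type*} [Field F] [Fintype F]
    {q m : ℕ} (hq : IsPrimePow q) (hm : m ≠ 0) (hF : Fintype.card F = q ^ m) :
    ∃ φ : F →+* F, ∀ z, φ z = z ^ q := by
  obtain ⟨p, n, hp, hn, rfl⟩ := hq
  obtain ⟨r, hchar, d, hrp, hcard⟩ := FiniteField.card' F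
  have hrp' : r = p := by
    rw [hF, ← pow_mul] at hcard
    exact (eq_of_prime_pow_eq hp hrp.prime (by positivity) hcard).symm
  subst hrp'
  have : Fact r.Prime := ⟨hrp⟩
  exact ⟨iterateFrobenius F r n, fun _ => rfl⟩

theorem pow_eq_self_harmonicMean {F : Type*} [Field F] {q : ℕ} (φ : F →+* F)
    (hφ : ∀ z, φ z = z ^ q) {s t : F} (hs : s ^ q = s) (ht : t ^ q = t) :
    (2 * s * t / (s + t)) ^ q = 2 * s * t / (s + t) := by
  rw [← hφ] at hs ht ⊢
  simp only [map_div₀, map_mul, map_add, map_ofNat, hs, ht]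

theorem memBM_zero_fst_iff {q : ℕ} (hq : q ≠ 0) {F : Type*} [Field F] (a b y : F) :
    memBM q a b (0, y) ↔ y ^ q = y := by
  simp only [memBM, zero_pow two_ne_zero, zero_pow (mul_ne_zero two_ne_zero hq),
    zero_pow (Nat.succ_ne_zero q), mul_zero, sub_zero, add_zero, eq_comm (a := (0 : F)),
    sub_eq_zero]
  exact eq_comm

theorem collin_harmonicMean_ptM_ptN {F : Type*} [Field F] (x k h s t : F)
    (hsth : s - t * h ≠ 0) (htsh : t - s * h ≠ 0) (hsum : s + t ≠ 0) :
    Collin ((0 : F), 2 * s * t / (s + t)) (ptM x k h s t) (ptN x k h s t) := by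
  -- `field_simp` only recognises the denominators `s - h * t`, `t - h * s` in this normal form.
  rw [mul_comm] at hsth htsh
  unfold Collin ptM ptN Wc Uc Vc Zc
  field_simp
  ring

theorem stmt_18_general (q : ℕ) (hq_pp : IsPrimePow q)
    (F : Type*) [Field F] [Fintype F] (hF : Fintype.card F = q ^ 2)
    (x k h s t : F) (hadm : Admissible q x k h s t) (hsum : s + t ≠ 0) :
    Collin ((0 : F), 2 * s * t / (s + t)) (ptM x k h s t) (ptN x k h s t) ∧
      ∀ a b : F, memBM q a b ((0 : F), 2 * s * t / (s + t)) := by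
  obtain ⟨-, -, -, -, hs, ht, -, -, -, hsth, htsh⟩ := hadm
  obtain ⟨φ, hφ⟩ := FiniteField.exists_ringHom_eq_pow_of_card_eq_pow hq_pp two_ne_zero hF
  refine ⟨collin_harmonicMean_ptM_ptN x k h s t hsth htsh hsum, fun a b => ?_⟩
  rw [memBM_zero_fst_iff hq_pp.ne_zero]
  exact pow_eq_self_harmonicMean φ hφ hs ht

theorem stmt_18 (q : ℕ) (hq_odd : Odd q) (hq_pp : IsPrimePow q)
    (F : Type*) [Field F] [Fintype F] (hF : Fintype.card F = q ^ 2)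
    (x k h s t : F) (hadm : Admissible q x k h s t) (hsum : s + t ≠ 0) :
    Collin ((0 : F), 2 * s * t / (s + t)) (ptM x k h s t) (ptN x k h s t) ∧
      ∀ a b : F, memBM q a b ((0 : F), 2 * s * t / (s + t)) :=
  stmt_18_general q hq_pp F hF x k h s t hadm hsum
end
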